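/- arXiv:1309.4278 — 8 statements merged into one kernel-verified Lean document; each statement's English description precedes it below -/
import Mathlib

section
/- Let ω : ℂ → ℝ be a smooth solution of the sinh-Gordon equation 8·ω_{zz̄} + sinh(2ω) = 0 on ℂ. Then the function u = ω_{zzz} − 2·(ω_z)³ (a smooth complex-valued function on ℂ) solves the linearized sinh-Gordon equation 4·u_{zz̄} + u·cosh(2ω) = 0 on ℂ. -/
open Complex

/-- The Wirtinger derivative `∂f/∂z = (1/2)(∂f/∂x - i ∂f/∂y)` of a function `f : ℂ → ℂ`. -/
noncomputable def wirtingerZ (f : ℂ → ℂ) (z : ℂ) : ℂ :=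
  (1 / 2) * (fderiv ℝ f z 1 - Complex.I * fderiv ℝ f z Complex.I)

/-- The Wirtinger derivative `∂f/∂z̄ = (1/2)(∂f/∂x + i ∂f/∂y)` of a function `f : ℂ → ℂ`. -/
noncomputable def wirtingerZbar (f : ℂ → ℂ) (z : ℂ) : ℂ :=
  (1 / 2) * (fderiv ℝ f z 1 + Complex.I * fderiv ℝ f z Complex.I)

/-!
Both Wirtinger derivatives are instances of `wirtinger s f = (1/2)(f_x + s f_y)`, with `s = -i`
and `s = i`; this operator is `ℂ`-linear, obeys the Leibniz and chain rules, and commutes with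
itself on `C²` functions by the symmetry of second derivatives. Write `a = ω_z`, `b = ω_zz`.
The equation says `a_z̄ = -sinh(2ω)/8`; commuting `∂` past `∂̄` gives `b_z̄ = -cosh(2ω) a/4` and
then `ω_zzzz̄ = -sinh(2ω) a²/2 - cosh(2ω) b/4`, so `u_z̄ = (sinh(2ω) a² - cosh(2ω) b)/4`.
One more `∂` gives `4 u_zz̄ = 2 cosh(2ω) a³ - cosh(2ω) ω_zzz = -cosh(2ω) u`.
-/

noncomputable def wirtinger (s : ℂ) (f : ℂ → ℂ) (z : ℂ) : ℂ :=
  (1 / 2) * (fderiv ℝ f z 1 + s * fderiv ℝ f z I)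

theorem wirtingerZ_eq_wirtinger : wirtingerZ = wirtinger (-I) := by
  ext f z
  simp only [wirtingerZ, wirtinger]
  ring

theorem wirtingerZbar_eq_wirtinger : wirtingerZbar = wirtinger I := rfl

section Calculus

open scoped ContDiff

variable {s t : ℂ} {f g : ℂ → ℂ} {z : ℂ}

theorem HasFDerivAt.wirtinger_eq {f' : ℂ →L[ℝ] ℂ} (hf : HasFDerivAt f f' z) :
    wirtinger s f z = (1 / 2) * (f' 1 + s * f' I) := by
  rw [wirtinger, hf.fderiv]

theorem wirtinger_sub (hf : DifferentiableAt ℝ f z) (hg : DifferentiableAt ℝ g z) :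
    wirtinger s (fun x => f x - g x) z = wirtinger s f z - wirtinger s g z := by
  simp only [wirtinger, fderiv_fun_sub hf hg, sub_apply]
  ring

theorem wirtinger_const_mul (c : ℂ) (hf : DifferentiableAt ℝ f z) :
    wirtinger s (fun x => c * f x) z = c * wirtinger s f z := by
  simp only [wirtinger, fderiv_const_mul hf, smul_apply, smul_eq_mul]
  ring

theorem wirtinger_mul (hf : DifferentiableAt ℝ f z) (hg : DifferentiableAt ℝ g z) :
    wirtinger s (fun x => f x * g x) z = wirtinger s f z * g z + f z * wirtinger s g z := by
  simp only [wirtinger, fderiv_fun_mul hf hg, add_apply, smul_apply, smul_eq_mul]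
  ring

theorem wirtinger_comp {h : ℂ → ℂ} {h' : ℂ} (hh : HasDerivAt h h' (f z))
    (hf : DifferentiableAt ℝ f z) :
    wirtinger s (fun x => h (f x)) z = h' * wirtinger s f z := by
  rw [HasFDerivAt.wirtinger_eq (f := fun x => h (f x))
    ((hh.hasFDerivAt.restrictScalars ℝ).comp z hf.hasFDerivAt), wirtinger]
  simp
  ring

theorem wirtinger_pow (n : ℕ) (hf : DifferentiableAt ℝ f z) :
    wirtinger s (fun x => f x ^ n) z = n * f z ^ (n - 1) * wirtinger s f z :=
  wirtinger_comp (hasDerivAt_pow n (f z)) hf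

theorem wirtinger_sinh (hf : DifferentiableAt ℝ f z) :
    wirtinger s (fun x => sinh (f x)) z = cosh (f z) * wirtinger s f z :=
  wirtinger_comp (hasDerivAt_sinh (f z)) hf

theorem wirtinger_cosh (hf : DifferentiableAt ℝ f z) :
    wirtinger s (fun x => cosh (f x)) z = sinh (f z) * wirtinger s f z :=
  wirtinger_comp (hasDerivAt_cosh (f z)) hf

theorem contDiff_wirtinger {n : WithTop ℕ∞} (hf : ContDiff ℝ (n + 1) f) :
    ContDiff ℝ n (wirtinger s f) := by
  have := hf.fderiv_right le_rfl
  unfold wirtinger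
  fun_prop

theorem wirtinger_wirtinger (hf : DifferentiableAt ℝ (fderiv ℝ f) z) :
    wirtinger s (wirtinger t f) z = (1 / 2) * ((1 / 2) * (fderiv ℝ (fderiv ℝ f) z 1 1
      + t * fderiv ℝ (fderiv ℝ f) z 1 I) + s * ((1 / 2) * (fderiv ℝ (fderiv ℝ f) z I 1
      + t * fderiv ℝ (fderiv ℝ f) z I I))) := by
  have hdir (v : ℂ) :
      HasFDerivAt (fun x => fderiv ℝ f x v) ((fderiv ℝ (fderiv ℝ f) z).flip v) z := by
    simpa using hf.hasFDerivAt.clm_apply (hasFDerivAt_const v z)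
  rw [HasFDerivAt.wirtinger_eq (f := wirtinger t f)
    (((hdir 1).add ((hdir I).const_mul t)).const_mul (1 / 2))]
  simp
  ring

theorem wirtinger_comm (hf : ContDiffAt ℝ 2 f z) :
    wirtinger s (wirtinger t f) z = wirtinger t (wirtinger s f) z := by
  have hd : DifferentiableAt ℝ (fderiv ℝ f) z :=
    (hf.fderiv_right (m := 1) le_rfl).differentiableAt one_ne_zero
  rw [wirtinger_wirtinger hd, wirtinger_wirtinger hd, (hf.isSymmSndFDerivAt (by simp)).eq 1 I]
  ring

theorem ContDiff.wirtinger (hf : ContDiff ℝ ∞ f) : ContDiff ℝ ∞ (wirtinger s f) :=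
  contDiff_wirtinger (by simpa using hf)

theorem wirtinger_comm_of_contDiff (hf : ContDiff ℝ ∞ f) (z : ℂ) :
    wirtinger s (wirtinger t f) z = wirtinger t (wirtinger s f) z :=
  wirtinger_comm (hf.contDiffAt.of_le (WithTop.coe_le_coe.2 le_top))

end Calculus

def SolvesSinhGordon (g : ℂ → ℂ) : Prop :=
  ∀ z, 8 * wirtingerZbar (wirtingerZ g) z + sinh (2 * g z) = 0

noncomputable def secondJacobiField (g : ℂ → ℂ) : ℂ → ℂ := fun z =>
  wirtingerZ (wirtingerZ (wirtingerZ g)) z - 2 * wirtingerZ g z ^ 3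

section SinhGordon

open scoped ContDiff

variable {g : ℂ → ℂ}

theorem SolvesSinhGordon.wirtingerZbar_wirtingerZ (hsg : SolvesSinhGordon g) :
    wirtingerZbar (wirtingerZ g) = fun x => -(1 / 8) * sinh (2 * g x) := by
  funext x
  linear_combination (1 / 8 : ℂ) * hsg x

theorem SolvesSinhGordon.wirtingerZbar_wirtingerZ_wirtingerZ (hsg : SolvesSinhGordon g)
    (hg : ContDiff ℝ ∞ g) :
    wirtingerZbar (wirtingerZ (wirtingerZ g))
      = fun x => -(1 / 4) * (cosh (2 * g x) * wirtingerZ g x) := by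
  have h := hsg.wirtingerZbar_wirtingerZ
  rw [wirtingerZ_eq_wirtinger, wirtingerZbar_eq_wirtinger] at *
  have hg' : Differentiable ℝ g := hg.differentiable (by simp)
  funext x
  rw [wirtinger_comm_of_contDiff hg.wirtinger, h]
  simp (disch := fun_prop) only [wirtinger_const_mul, wirtinger_sinh]
  ring

theorem SolvesSinhGordon.wirtingerZbar_wirtingerZ_wirtingerZ_wirtingerZ
    (hsg : SolvesSinhGordon g) (hg : ContDiff ℝ ∞ g) :
    wirtingerZbar (wirtingerZ (wirtingerZ (wirtingerZ g)))
      = fun x => -(1 / 2) * (sinh (2 * g x) * wirtingerZ g x ^ 2)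
          - (1 / 4) * (cosh (2 * g x) * wirtingerZ (wirtingerZ g) x) := by
  have h := hsg.wirtingerZbar_wirtingerZ_wirtingerZ hg
  rw [wirtingerZ_eq_wirtinger, wirtingerZbar_eq_wirtinger] at *
  have hg' : Differentiable ℝ g := hg.differentiable (by simp)
  have ha : Differentiable ℝ (wirtinger (-I) g) := hg.wirtinger.differentiable (by simp)
  funext x
  rw [wirtinger_comm_of_contDiff hg.wirtinger.wirtinger, h]
  simp (disch := fun_prop) only [wirtinger_const_mul, wirtinger_mul, wirtinger_cosh]
  ring

theorem SolvesSinhGordon.wirtingerZbar_secondJacobiField (hsg : SolvesSinhGordon g)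
    (hg : ContDiff ℝ ∞ g) :
    wirtingerZbar (secondJacobiField g)
      = fun x => (1 / 4) * (sinh (2 * g x) * wirtingerZ g x ^ 2)
          - (1 / 4) * (cosh (2 * g x) * wirtingerZ (wirtingerZ g) x) := by
  have h₁ := hsg.wirtingerZbar_wirtingerZ
  have h₃ := hsg.wirtingerZbar_wirtingerZ_wirtingerZ_wirtingerZ hg
  unfold secondJacobiField
  rw [wirtingerZ_eq_wirtinger, wirtingerZbar_eq_wirtinger] at *
  have ha : Differentiable ℝ (wirtinger (-I) g) := hg.wirtinger.differentiable (by simp)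
  have hc : Differentiable ℝ (wirtinger (-I) (wirtinger (-I) (wirtinger (-I) g))) :=
    hg.wirtinger.wirtinger.wirtinger.differentiable (by simp)
  funext x
  simp (disch := fun_prop) only [wirtinger_sub, wirtinger_const_mul, wirtinger_pow, h₁, h₃]
  push_cast
  ring

theorem contDiff_secondJacobiField (hg : ContDiff ℝ ∞ g) :
    ContDiff ℝ ∞ (secondJacobiField g) := by
  have ha : ContDiff ℝ ∞ (wirtinger (-I) g) := hg.wirtinger
  have hc : ContDiff ℝ ∞ (wirtinger (-I) (wirtinger (-I) (wirtinger (-I) g))) :=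
    ha.wirtinger.wirtinger
  unfold secondJacobiField
  rw [wirtingerZ_eq_wirtinger]
  fun_prop

theorem SolvesSinhGordon.linearized_secondJacobiField (hsg : SolvesSinhGordon g)
    (hg : ContDiff ℝ ∞ g) (z : ℂ) :
    4 * wirtingerZbar (wirtingerZ (secondJacobiField g)) z
      + secondJacobiField g z * cosh (2 * g z) = 0 := by
  have h := hsg.wirtingerZbar_secondJacobiField hg
  rw [wirtingerZ_eq_wirtinger, wirtingerZbar_eq_wirtinger] at *
  rw [wirtinger_comm_of_contDiff (contDiff_secondJacobiField hg), h]
  unfold secondJacobiField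
  rw [wirtingerZ_eq_wirtinger]
  have hg' : Differentiable ℝ g := hg.differentiable (by simp)
  have ha : Differentiable ℝ (wirtinger (-I) g) := hg.wirtinger.differentiable (by simp)
  have hb : Differentiable ℝ (wirtinger (-I) (wirtinger (-I) g)) :=
    hg.wirtinger.wirtinger.differentiable (by simp)
  simp (disch := fun_prop) only [wirtinger_sub, wirtinger_const_mul, wirtinger_mul, wirtinger_pow,
    wirtinger_sinh, wirtinger_cosh]
  push_cast
  ring

end SinhGordon

/-- If `ω : ℂ → ℝ` is a smooth solution of the sinh-Gordon equation
`8 ω_{zz̄} + sinh(2ω) = 0`, then `u = ω_{zzz} - 2 (ω_z)³` solves the linearized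
sinh-Gordon equation `4 u_{zz̄} + u cosh(2ω) = 0`. -/
theorem pinkall_sterling_second_jacobi_field (ω : ℂ → ℝ)
    (hω : ContDiff ℝ (⊤ : ℕ∞) ω)
    (hsg : ∀ z : ℂ,
      8 * wirtingerZbar (wirtingerZ (fun w => (ω w : ℂ))) z
        + Complex.sinh (2 * (ω z : ℂ)) = 0) :
    ∀ z : ℂ,
      4 * wirtingerZbar (wirtingerZ (fun w =>
            wirtingerZ (wirtingerZ (wirtingerZ (fun v => (ω v : ℂ)))) w
              - 2 * (wirtingerZ (fun v => (ω v : ℂ)) w) ^ 3)) z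
        + (wirtingerZ (wirtingerZ (wirtingerZ (fun v => (ω v : ℂ)))) z
              - 2 * (wirtingerZ (fun v => (ω v : ℂ)) z) ^ 3)
          * Complex.cosh (2 * (ω z : ℂ)) = 0 :=
  SolvesSinhGordon.linearized_secondJacobiField hsg (ofRealCLM.contDiff.comp hω)
end

section
/- Let ω : ℂ → ℝ be smooth, and for each λ ∈ ℂ \ {0} define smooth matrix-valued functions A_λ, B_λ : ℂ → M₂(ℂ) by A_λ = (1/4)·[[2ω_z, i·λ⁻¹·e^ω], [i·e^{−ω}, −2ω_z]] and B_λ = (1/4)·[[−2ω_{z̄}, i·e^{−ω}], [i·λ·e^ω, 2ω_{z̄}]]. Then ω satisfies the sinh-Gordon equation 8·ω_{zz̄} + sinh(2ω) = 0 on ℂ if and only if for every λ ∈ ℂ \ {0} the zero-curvature (Maurer–Cartan) equation ∂_{z̄}A_λ − ∂_z B_λ = A_λ·B_λ − B_λ·A_λ holds at every point of ℂ. -/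
/-!
Wirtinger derivatives obey the chain rule `∂(g ∘ f) = g' · ∂f` for holomorphic `g`, and
`∂_z ∂_z̄ = ∂_z̄ ∂_z` on `C²` functions by symmetry of the second derivative. With these, a direct
computation shows that for `λ ≠ 0` the curvature `∂_z̄ A_λ - ∂_z B_λ - [A_λ, B_λ]` equals
`(8 ω_{zz̄} + sinh 2ω) / 8 · diag(1, -1)`: the off-diagonal entries cancel identically, and in the
diagonal ones `λ` only enters through `λ⁻¹ λ = 1`.
-/

open Complex Matrix

/-- The `dz`-coefficient `A_λ` of the 1-form `α_λ` associated to `ω`. -/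
noncomputable def Amat (ω : ℂ → ℝ) (l : ℂ) (z : ℂ) : Matrix (Fin 2) (Fin 2) ℂ :=
  (1 / 4 : ℂ) • !![2 * wirtingerZ (fun w => (ω w : ℂ)) z,
                   Complex.I * l⁻¹ * Complex.exp (ω z);
                   Complex.I * Complex.exp (-(ω z : ℂ)),
                   -(2 * wirtingerZ (fun w => (ω w : ℂ)) z)]

/-- The `dz̄`-coefficient `B_λ` of the 1-form `α_λ` associated to `ω`. -/
noncomputable def Bmat (ω : ℂ → ℝ) (l : ℂ) (z : ℂ) : Matrix (Fin 2) (Fin 2) ℂ :=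
  (1 / 4 : ℂ) • !![-(2 * wirtingerZbar (fun w => (ω w : ℂ)) z),
                   Complex.I * Complex.exp (-(ω z : ℂ));
                   Complex.I * l * Complex.exp (ω z),
                   2 * wirtingerZbar (fun w => (ω w : ℂ)) z]

section Wirtinger

variable {f : ℂ → ℂ} {z : ℂ}

theorem HasDerivAt.wirtingerZ_comp {g : ℂ → ℂ} {g' : ℂ} (hg : HasDerivAt g g' (f z))
    (hf : DifferentiableAt ℝ f z) :
    wirtingerZ (fun w => g (f w)) z = g' * wirtingerZ f z := by
  have h : HasFDerivAt (fun w => g (f w)) _ z :=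
    (hg.hasFDerivAt.restrictScalars ℝ).comp z hf.hasFDerivAt
  simp only [wirtingerZ, h.fderiv, ContinuousLinearMap.comp_apply,
    ContinuousLinearMap.coe_restrictScalars', ContinuousLinearMap.toSpanSingleton_apply, smul_eq_mul]
  ring

theorem HasDerivAt.wirtingerZbar_comp {g : ℂ → ℂ} {g' : ℂ} (hg : HasDerivAt g g' (f z))
    (hf : DifferentiableAt ℝ f z) :
    wirtingerZbar (fun w => g (f w)) z = g' * wirtingerZbar f z := by
  have h : HasFDerivAt (fun w => g (f w)) _ z :=
    (hg.hasFDerivAt.restrictScalars ℝ).comp z hf.hasFDerivAt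
  simp only [wirtingerZbar, h.fderiv, ContinuousLinearMap.comp_apply,
    ContinuousLinearMap.coe_restrictScalars', ContinuousLinearMap.toSpanSingleton_apply, smul_eq_mul]
  ring

theorem fderiv_wirtingerZ_apply (hf : DifferentiableAt ℝ (fderiv ℝ f) z) (u : ℂ) :
    fderiv ℝ (wirtingerZ f) z u =
      (1 / 2) * (fderiv ℝ (fderiv ℝ f) z u 1 - I * fderiv ℝ (fderiv ℝ f) z u I) := by
  have h : HasFDerivAt (wirtingerZ f) _ z :=
    ((hf.hasFDerivAt.clm_apply (hasFDerivAt_const 1 z)).sub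
      ((hf.hasFDerivAt.clm_apply (hasFDerivAt_const I z)).const_mul I)).const_mul (1 / 2 : ℂ)
  simp [h.fderiv, mul_sub]

theorem fderiv_wirtingerZbar_apply (hf : DifferentiableAt ℝ (fderiv ℝ f) z) (u : ℂ) :
    fderiv ℝ (wirtingerZbar f) z u =
      (1 / 2) * (fderiv ℝ (fderiv ℝ f) z u 1 + I * fderiv ℝ (fderiv ℝ f) z u I) := by
  have h : HasFDerivAt (wirtingerZbar f) _ z :=
    ((hf.hasFDerivAt.clm_apply (hasFDerivAt_const 1 z)).add
      ((hf.hasFDerivAt.clm_apply (hasFDerivAt_const I z)).const_mul I)).const_mul (1 / 2 : ℂ)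
  simp [h.fderiv, mul_add]

theorem wirtingerZ_wirtingerZbar_comm (hf : ContDiffAt ℝ 2 f z) :
    wirtingerZ (wirtingerZbar f) z = wirtingerZbar (wirtingerZ f) z := by
  have hDf : DifferentiableAt ℝ (fderiv ℝ f) z :=
    (hf.fderiv_right (m := 1) (by norm_num)).differentiableAt one_ne_zero
  have hsymm := hf.isSymmSndFDerivAt (by simp) 1 I
  simp only [wirtingerZ, wirtingerZbar, fderiv_wirtingerZ_apply hDf,
    fderiv_wirtingerZbar_apply hDf] at hsymm ⊢
  rw [hsymm]
  ring

theorem differentiableAt_wirtingerZ (hf : DifferentiableAt ℝ (fderiv ℝ f) z) :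
    DifferentiableAt ℝ (wirtingerZ f) z := by
  unfold wirtingerZ; fun_prop

theorem differentiableAt_wirtingerZbar (hf : DifferentiableAt ℝ (fderiv ℝ f) z) :
    DifferentiableAt ℝ (wirtingerZbar f) z := by
  unfold wirtingerZbar; fun_prop

end Wirtinger

noncomputable def matrixWirtingerZ {m n : Type*} (F : ℂ → Matrix m n ℂ) (z : ℂ) : Matrix m n ℂ :=
  Matrix.of fun i j => wirtingerZ (fun w => F w i j) z

noncomputable def matrixWirtingerZbar {m n : Type*} (F : ℂ → Matrix m n ℂ) (z : ℂ) :
    Matrix m n ℂ :=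
  Matrix.of fun i j => wirtingerZbar (fun w => F w i j) z

-- `2 dα_λ + [α_λ ∧ α_λ] = -2 · curvature ω λ · dz ∧ dz̄`
noncomputable def curvature (ω : ℂ → ℝ) (l z : ℂ) : Matrix (Fin 2) (Fin 2) ℂ :=
  matrixWirtingerZbar (Amat ω l) z - matrixWirtingerZ (Bmat ω l) z - ⁅Amat ω l z, Bmat ω l z⁆

section ZeroCurvature

variable {ω : ℂ → ℝ}

theorem matrixWirtingerZbar_Amat (hω : ContDiff ℝ 2 ω) (l z : ℂ) :
    matrixWirtingerZbar (Amat ω l) z =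
      (1 / 4 : ℂ) • !![2 * wirtingerZbar (wirtingerZ (fun w => (ω w : ℂ))) z,
        I * l⁻¹ * exp (ω z) * wirtingerZbar (fun w => (ω w : ℂ)) z;
        -(I * exp (-(ω z : ℂ)) * wirtingerZbar (fun w => (ω w : ℂ)) z),
        -(2 * wirtingerZbar (wirtingerZ (fun w => (ω w : ℂ))) z)] := by
  have hφ : ContDiff ℝ 2 (fun w => (ω w : ℂ)) := ofRealCLM.contDiff.comp hω
  have hφz : DifferentiableAt ℝ (fun w => (ω w : ℂ)) z := hφ.differentiable two_ne_zero z
  have hZφ : DifferentiableAt ℝ (wirtingerZ (fun w => (ω w : ℂ))) z :=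
    differentiableAt_wirtingerZ ((hφ.fderiv_right (m := 1) le_rfl).differentiable one_ne_zero z)
  ext i j
  fin_cases i <;> fin_cases j <;>
    simp only [matrixWirtingerZbar, Amat, Matrix.smul_apply, Matrix.of_apply, Matrix.cons_val',
      Matrix.cons_val_zero, Matrix.cons_val_one, Matrix.empty_val', Matrix.cons_val_fin_one,
      smul_eq_mul, Fin.zero_eta, Fin.mk_one, Fin.isValue]
  · rw [(((hasDerivAt_id' _).const_mul 2).const_mul (1 / 4 : ℂ)).wirtingerZbar_comp hZφ]
    ring
  · rw [(((hasDerivAt_exp _).const_mul (I * l⁻¹)).const_mul (1 / 4 : ℂ)).wirtingerZbar_comp hφz]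
    ring
  · rw [(((hasDerivAt_neg' _).cexp.const_mul I).const_mul (1 / 4 : ℂ)).wirtingerZbar_comp hφz]
    ring
  · rw [(((hasDerivAt_id' _).const_mul 2).fun_neg.const_mul (1 / 4 : ℂ)).wirtingerZbar_comp hZφ]
    ring

theorem matrixWirtingerZ_Bmat (hω : ContDiff ℝ 2 ω) (l z : ℂ) :
    matrixWirtingerZ (Bmat ω l) z =
      (1 / 4 : ℂ) • !![-(2 * wirtingerZbar (wirtingerZ (fun w => (ω w : ℂ))) z),
        -(I * exp (-(ω z : ℂ)) * wirtingerZ (fun w => (ω w : ℂ)) z);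
        I * l * exp (ω z) * wirtingerZ (fun w => (ω w : ℂ)) z,
        2 * wirtingerZbar (wirtingerZ (fun w => (ω w : ℂ))) z] := by
  have hφ : ContDiff ℝ 2 (fun w => (ω w : ℂ)) := ofRealCLM.contDiff.comp hω
  have hφz : DifferentiableAt ℝ (fun w => (ω w : ℂ)) z := hφ.differentiable two_ne_zero z
  have hZφ : DifferentiableAt ℝ (wirtingerZbar (fun w => (ω w : ℂ))) z :=
    differentiableAt_wirtingerZbar ((hφ.fderiv_right (m := 1) le_rfl).differentiable one_ne_zero z)
  have hcomm := wirtingerZ_wirtingerZbar_comm (hφ.contDiffAt (x := z))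
  ext i j
  fin_cases i <;> fin_cases j <;>
    simp only [matrixWirtingerZ, Bmat, Matrix.smul_apply, Matrix.of_apply, Matrix.cons_val',
      Matrix.cons_val_zero, Matrix.cons_val_one, Matrix.empty_val', Matrix.cons_val_fin_one,
      smul_eq_mul, Fin.zero_eta, Fin.mk_one, Fin.isValue]
  · rw [(((hasDerivAt_id' _).const_mul 2).fun_neg.const_mul (1 / 4 : ℂ)).wirtingerZ_comp hZφ, hcomm]
    ring
  · rw [(((hasDerivAt_neg' _).cexp.const_mul I).const_mul (1 / 4 : ℂ)).wirtingerZ_comp hφz]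
    ring
  · rw [(((hasDerivAt_exp _).const_mul (I * l)).const_mul (1 / 4 : ℂ)).wirtingerZ_comp hφz]
    ring
  · rw [(((hasDerivAt_id' _).const_mul 2).const_mul (1 / 4 : ℂ)).wirtingerZ_comp hZφ, hcomm]
    ring

theorem curvature_eq (hω : ContDiff ℝ 2 ω) {l : ℂ} (hl : l ≠ 0) (z : ℂ) :
    curvature ω l z =
      ((8 * wirtingerZbar (wirtingerZ (fun w => (ω w : ℂ))) z + sinh (2 * (ω z : ℂ))) / 8) •
        !![1, 0; 0, -1] := by
  have hsinh : sinh (2 * (ω z : ℂ)) = (exp (ω z) * exp (ω z) - exp (-ω z) * exp (-ω z)) / 2 := by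
    rw [sinh, two_mul, exp_add, neg_add, exp_add]
  have hl' : l⁻¹ * l = 1 := inv_mul_cancel₀ hl
  rw [curvature, matrixWirtingerZbar_Amat hω, matrixWirtingerZ_Bmat hω, Ring.lie_def]
  ext i j
  fin_cases i <;> fin_cases j <;>
    simp only [Amat, Bmat, Matrix.mul_apply, Fin.sum_univ_two, Matrix.sub_apply,
      Matrix.smul_apply, smul_eq_mul, Matrix.of_apply, Matrix.cons_val', Matrix.cons_val_zero,
      Matrix.cons_val_one, Matrix.empty_val', Matrix.cons_val_fin_one, Fin.zero_eta, Fin.mk_one,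
      Fin.isValue]
  · linear_combination (-(1 / 16) * I ^ 2 * exp (ω z) * exp (ω z)) * hl'
      - ((exp (ω z) * exp (ω z) - exp (-ω z) * exp (-ω z)) / 16) * I_sq - (1 / 8) * hsinh
  · ring
  · ring
  · linear_combination ((1 / 16) * I ^ 2 * exp (ω z) * exp (ω z)) * hl'
      + ((exp (ω z) * exp (ω z) - exp (-ω z) * exp (-ω z)) / 16) * I_sq + (1 / 8) * hsinh

theorem zeroCurvature_iff_sinhGordon (hω : ContDiff ℝ 2 ω) {l : ℂ} (hl : l ≠ 0) (z : ℂ) :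
    (∀ i j : Fin 2,
        wirtingerZbar (fun w => Amat ω l w i j) z - wirtingerZ (fun w => Bmat ω l w i j) z
          = (Amat ω l z * Bmat ω l z - Bmat ω l z * Amat ω l z) i j) ↔
      8 * wirtingerZbar (wirtingerZ (fun w => (ω w : ℂ))) z + sinh (2 * (ω z : ℂ)) = 0 := by
  have hdiag : !![(1 : ℂ), 0; 0, -1] ≠ 0 := fun h => one_ne_zero (congrFun₂ h 0 0)
  calc (∀ i j : Fin 2, _) ↔ curvature ω l z = 0 := by
        simp only [← Matrix.ext_iff, curvature, Ring.lie_def, matrixWirtingerZ,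
          matrixWirtingerZbar, Matrix.sub_apply, Matrix.of_apply, sub_eq_zero]
    _ ↔ _ := by
        rw [curvature_eq hω hl, smul_eq_zero, or_iff_left hdiag, div_eq_zero_iff,
          or_iff_left (by norm_num)]

end ZeroCurvature

/-- `ω` solves the sinh-Gordon equation `8 ω_{zz̄} + sinh(2ω) = 0` if and only if for every
`λ ∈ ℂ \ {0}` the zero-curvature (Maurer–Cartan) equation
`∂_{z̄} A_λ − ∂_z B_λ = A_λ B_λ − B_λ A_λ` holds at every point (entrywise). -/
theorem sinhGordon_iff_zero_curvature (ω : ℂ → ℝ) (hω : ContDiff ℝ (⊤ : ℕ∞) ω) :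
    (∀ z : ℂ,
        8 * wirtingerZbar (wirtingerZ (fun w => (ω w : ℂ))) z
          + Complex.sinh (2 * (ω z : ℂ)) = 0) ↔
    (∀ l : ℂ, l ≠ 0 → ∀ z : ℂ, ∀ i j : Fin 2,
        wirtingerZbar (fun w => Amat ω l w i j) z - wirtingerZ (fun w => Bmat ω l w i j) z
          = (Amat ω l z * Bmat ω l z - Bmat ω l z * Amat ω l z) i j) := by
  have hω2 : ContDiff ℝ 2 ω := hω.of_le (by norm_cast)
  exact ⟨fun h l hl z => (zeroCurvature_iff_sinhGordon hω2 hl z).2 (h z),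
    fun h z => (zeroCurvature_iff_sinhGordon hω2 one_ne_zero z).1 (h 1 one_ne_zero z)⟩
end

section
/- Let g ∈ ℕ and let ξ₋₁, ξ₀, …, ξ_g be trace-free 2×2 complex matrices with ξ₋₁ a complex multiple of E₁₂ = [[0,1],[0,0]], satisfying the reality condition ξ_d = −(conj ξ_{g−1−d})ᵀ for all d ∈ {−1, 0, …, g}; write ξ(λ) = Σ_{d=−1}^{g} ξ_d·λ^d for λ ∈ ℂ \ {0}. Then: (i) ξ(λ) = −λ^{g−1}·(conj ξ(1/conj λ))ᵀ for all λ ∈ ℂ \ {0}; (ii) if ξ(α) = 0 for some α ∈ ℂ \ {0}, then ξ(1/conj α) = 0; (iii) the function a(λ) := −λ·det ξ(λ) is a polynomial in λ of degree at most 2g which satisfies λ^{2g}·conj(a(1/conj λ)) = a(λ) for all λ ∈ ℂ \ {0}, and λ^{−g}·a(λ) is a nonpositive real number for every λ with |λ| = 1. -/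
open Complex Matrix Polynomial

noncomputable def xiFun (g : ℕ) (ξ : ℤ → Matrix (Fin 2) (Fin 2) ℂ) (l : ℂ) :
    Matrix (Fin 2) (Fin 2) ℂ :=
  ∑ d ∈ Finset.Icc (-1 : ℤ) (g : ℤ), l ^ d • ξ d

/-!
Reindexing `d ↦ g - 1 - d` turns the reality condition on the coefficients into the symmetry
`ξ(λ) = -λ^{g-1} ξ(1/λ̄)ᴴ`, and the symmetry of the roots follows at once. The polynomial `a` is
`-det(λ ξ(λ)) / λ`: `λ ξ(λ)` is a polynomial matrix with coefficients `ξ_{-1}, …, ξ_g`, so its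
determinant has constant coefficient `det ξ_{-1} = 0` and, in degree `2g + 2`, the coefficient
`det ξ_g = det ξ_{-1}ᴴ = 0`. On the unit circle `1/λ̄ = λ`, so `B = ξ(λ)` is trace free with
`B = -λ^{g-1} Bᴴ`, which forces `det B = λ^{g-1} (|B₀₀|² + |B₁₀|²)`.
-/

open ComplexConjugate

namespace Polynomial

variable {R : Type*} [CommRing R]

theorem eval_eq_mul_eval_divX {p : R[X]} (hp : p.coeff 0 = 0) (x : R) :
    p.eval x = x * p.divX.eval x := by
  conv_lhs => rw [← X_mul_divX_add p, hp]
  simp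

theorem natDegree_det_fin_two_le {M : Matrix (Fin 2) (Fin 2) R[X]} {n : ℕ}
    (hM : ∀ i j, (M i j).natDegree ≤ n) : M.det.natDegree ≤ n + n := by
  rw [det_fin_two]
  exact (natDegree_sub_le_of_le (natDegree_mul_le_of_le (hM 0 0) (hM 1 1))
    (natDegree_mul_le_of_le (hM 0 1) (hM 1 0))).trans (max_self _).le

theorem coeff_det_fin_two_of_natDegree_le {M : Matrix (Fin 2) (Fin 2) R[X]} {n : ℕ}
    (hM : ∀ i j, (M i j).natDegree ≤ n) :
    M.det.coeff (n + n) = (M.map (coeff · n)).det := by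
  rw [det_fin_two, det_fin_two, coeff_sub, coeff_mul_add_eq_of_natDegree_le (hM 0 0) (hM 1 1),
    coeff_mul_add_eq_of_natDegree_le (hM 0 1) (hM 1 0)]
  rfl

theorem coeff_zero_det {n : Type*} [Fintype n] [DecidableEq n] (M : Matrix n n R[X]) :
    M.det.coeff 0 = (M.map (coeff · 0)).det :=
  constantCoeff.map_det M

end Polynomial

theorem Matrix.det_eq_mul_normSq_of_eq_neg_smul_conjTranspose {B : Matrix (Fin 2) (Fin 2) ℂ}
    {μ : ℂ} (htr : B.trace = 0) (hB : B = -μ • Bᴴ) :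
    B.det = μ * (normSq (B 0 0) + normSq (B 1 0)) := by
  have h00 : B 0 0 = -μ * conj (B 0 0) := by
    conv_lhs => rw [hB]
    simp
  have h01 : B 0 1 = -μ * conj (B 1 0) := by
    conv_lhs => rw [hB]
    simp
  rw [trace_fin_two] at htr
  rw [det_fin_two, eq_neg_of_add_eq_zero_right htr, ← mul_conj, ← mul_conj]
  linear_combination (-B 0 0) * h00 - B 1 0 * h01

section Potential

variable {g : ℕ} {ξ : ℤ → Matrix (Fin 2) (Fin 2) ℂ}

theorem trace_xiFun (htr : ∀ d : ℤ, -1 ≤ d → d ≤ (g : ℤ) → (ξ d).trace = 0) (l : ℂ) :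
    (xiFun g ξ l).trace = 0 := by
  rw [xiFun, trace_sum]
  refine Finset.sum_eq_zero fun d hd => ?_
  rw [Finset.mem_Icc] at hd
  rw [trace_smul, htr d hd.1 hd.2, smul_zero]

theorem xiFun_eq_neg_zpow_smul_conjTranspose
    (hreal : ∀ d : ℤ, -1 ≤ d → d ≤ (g : ℤ) → ξ d = -(ξ ((g : ℤ) - 1 - d))ᴴ)
    {l : ℂ} (hl : l ≠ 0) :
    xiFun g ξ l = -(l ^ ((g : ℤ) - 1)) • (xiFun g ξ (conj l)⁻¹)ᴴ := by
  rw [xiFun, xiFun, conjTranspose_sum, Finset.smul_sum]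
  refine Finset.sum_nbij' (fun d => (g : ℤ) - 1 - d) (fun d => (g : ℤ) - 1 - d)
    (by intro d; simp only [Finset.mem_Icc]; omega)
    (by intro d; simp only [Finset.mem_Icc]; omega)
    (fun d _ => by ring) (fun d _ => by ring) fun d hd => ?_
  rw [Finset.mem_Icc] at hd
  have hconj : star ((conj l)⁻¹ ^ ((g : ℤ) - 1 - d)) = l ^ (d - ((g : ℤ) - 1)) := by
    rw [star_zpow₀, star_inv₀, Complex.star_def, conj_conj, _root_.inv_zpow', neg_sub]
  rw [conjTranspose_smul, hconj, hreal d hd.1 hd.2, smul_smul, neg_mul, ← zpow_add₀ hl,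
    add_sub_cancel, neg_smul, smul_neg]

theorem xiFun_inv_conj_eq_zero
    (hreal : ∀ d : ℤ, -1 ≤ d → d ≤ (g : ℤ) → ξ d = -(ξ ((g : ℤ) - 1 - d))ᴴ)
    {α : ℂ} (hα : α ≠ 0) (h : xiFun g ξ α = 0) : xiFun g ξ (conj α)⁻¹ = 0 := by
  have := xiFun_eq_neg_zpow_smul_conjTranspose hreal (l := (conj α)⁻¹) (by simpa using hα)
  rwa [map_inv₀, conj_conj, inv_inv, h, conjTranspose_zero, smul_zero] at this

theorem pow_mul_conj_neg_mul_det_xiFun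
    (hreal : ∀ d : ℤ, -1 ≤ d → d ≤ (g : ℤ) → ξ d = -(ξ ((g : ℤ) - 1 - d))ᴴ)
    {l : ℂ} (hl : l ≠ 0) :
    l ^ (2 * g) * conj (-(conj l)⁻¹ * (xiFun g ξ (conj l)⁻¹).det) = -l * (xiFun g ξ l).det := by
  rw [xiFun_eq_neg_zpow_smul_conjTranspose hreal hl, det_smul, det_conjTranspose,
    Fintype.card_fin, neg_sq, zpow_sub_one₀ hl, zpow_natCast, map_mul, map_neg, map_inv₀,
    conj_conj, Complex.star_def]
  field_simp
  ring

theorem zpow_neg_mul_neg_mul_det_xiFun_of_norm_eq_one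
    (htr : ∀ d : ℤ, -1 ≤ d → d ≤ (g : ℤ) → (ξ d).trace = 0)
    (hreal : ∀ d : ℤ, -1 ≤ d → d ≤ (g : ℤ) → ξ d = -(ξ ((g : ℤ) - 1 - d))ᴴ)
    {l : ℂ} (hl : ‖l‖ = 1) :
    l ^ (-(g : ℤ)) * (-l * (xiFun g ξ l).det)
      = ((-(normSq (xiFun g ξ l 0 0) + normSq (xiFun g ξ l 1 0)) : ℝ) : ℂ) := by
  have hl₀ : l ≠ 0 := norm_ne_zero_iff.mp (hl ▸ one_ne_zero)
  have hinv : (conj l)⁻¹ = l := by simp [inv_def, normSq_eq_norm_sq, hl]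
  have hsymm := xiFun_eq_neg_zpow_smul_conjTranspose hreal hl₀
  rw [hinv] at hsymm
  rw [det_eq_mul_normSq_of_eq_neg_smul_conjTranspose (trace_xiFun htr l) hsymm, zpow_sub_one₀ hl₀,
    _root_.zpow_neg, zpow_natCast]
  push_cast
  field_simp

/-- `λ ξ(λ)` as a polynomial matrix. -/
noncomputable def xiPolyMatrix (g : ℕ) (ξ : ℤ → Matrix (Fin 2) (Fin 2) ℂ) :
    Matrix (Fin 2) (Fin 2) ℂ[X] :=
  of fun i j => ∑ d ∈ Finset.Icc (-1 : ℤ) g, C (ξ d i j) * X ^ (d + 1).toNat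

theorem map_eval_xiPolyMatrix {l : ℂ} (hl : l ≠ 0) :
    (xiPolyMatrix g ξ).map (eval l) = l • xiFun g ξ l := by
  ext i j
  simp only [xiPolyMatrix, xiFun, map_apply, of_apply, eval_finsetSum, eval_mul, eval_C,
    eval_pow, eval_X, Matrix.smul_apply, Matrix.sum_apply, smul_eq_mul, Finset.mul_sum]
  refine Finset.sum_congr rfl fun d hd => ?_
  rw [Finset.mem_Icc] at hd
  rw [← zpow_natCast, Int.toNat_of_nonneg (by omega), zpow_add_one₀ hl]
  ring

theorem coeff_xiPolyMatrix (i j : Fin 2) {k : ℕ} (hk : k ≤ g + 1) :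
    (xiPolyMatrix g ξ i j).coeff k = ξ (k - 1) i j := by
  simp only [xiPolyMatrix, of_apply, finsetSum_coeff, coeff_C_mul_X_pow]
  rw [Finset.sum_eq_single_of_mem ((k : ℤ) - 1) (Finset.mem_Icc.mpr ⟨by omega, by omega⟩)]
  · simp
  · intro d hd hne
    rw [Finset.mem_Icc] at hd
    rw [if_neg (by omega)]

theorem natDegree_xiPolyMatrix_le (i j : Fin 2) :
    (xiPolyMatrix g ξ i j).natDegree ≤ g + 1 := by
  rw [xiPolyMatrix, of_apply]
  refine natDegree_sum_le_of_forall_le _ _ fun d hd => ?_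
  rw [Finset.mem_Icc] at hd
  exact natDegree_C_mul_X_pow_le _ _ |>.trans (by omega)

theorem exists_natDegree_le_eval_eq_neg_mul_det_xiFun (hdet_neg_one : (ξ (-1)).det = 0)
    (hdet_g : (ξ g).det = 0) :
    ∃ a : ℂ[X], a.natDegree ≤ 2 * g ∧ ∀ l, l ≠ 0 → a.eval l = -l * (xiFun g ξ l).det := by
  set p := (xiPolyMatrix g ξ).det
  have hp₀ : p.coeff 0 = 0 := by
    rw [coeff_zero_det, ← hdet_neg_one]
    congr
    ext i j
    exact coeff_xiPolyMatrix i j (Nat.zero_le _)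
  have hp_top : p.coeff ((g + 1) + (g + 1)) = 0 := by
    rw [coeff_det_fin_two_of_natDegree_le natDegree_xiPolyMatrix_le, ← hdet_g]
    congr
    ext i j
    exact (coeff_xiPolyMatrix i j le_rfl).trans (by simp)
  have hp_deg : p.natDegree ≤ 2 * g + 1 := by
    refine natDegree_le_iff_coeff_eq_zero.mpr fun N hN => ?_
    rcases (show N = (g + 1) + (g + 1) ∨ (g + 1) + (g + 1) < N by omega) with rfl | hN
    · exact hp_top
    · exact coeff_eq_zero_of_natDegree_lt
        ((natDegree_det_fin_two_le natDegree_xiPolyMatrix_le).trans_lt hN)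
  refine ⟨-p.divX, ?_, fun l hl => ?_⟩
  · rw [natDegree_neg, natDegree_divX_eq_natDegree_tsub_one]
    omega
  · have hp_eval : p.eval l = l ^ 2 * (xiFun g ξ l).det := by
      rw [← coe_evalRingHom, RingHom.map_det, RingHom.mapMatrix_apply, coe_evalRingHom,
        map_eval_xiPolyMatrix hl, det_smul, Fintype.card_fin]
    rw [eval_eq_mul_eval_divX hp₀, sq, mul_assoc] at hp_eval
    rw [eval_neg, mul_left_cancel₀ hl hp_eval, neg_mul]

end Potential

/-- Basic properties of a potential `ξ(λ) = Σ_{d=-1}^{g} ξ_d λ^d`: the symmetry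
`ξ(λ) = -λ^{g-1} (conj ξ(1/conj λ))ᵀ`, the symmetry of the roots under
`λ ↦ 1/conj λ`, and the reality conditions for `a(λ) = -λ det ξ(λ)`. -/
theorem potential_reality (g : ℕ) (ξ : ℤ → Matrix (Fin 2) (Fin 2) ℂ)
    (htr : ∀ d : ℤ, -1 ≤ d → d ≤ (g : ℤ) → (ξ d).trace = 0)
    (hE : ∃ c : ℂ, ξ (-1) = c • (!![0, 1; 0, 0] : Matrix (Fin 2) (Fin 2) ℂ))
    (hreal : ∀ d : ℤ, -1 ≤ d → d ≤ (g : ℤ) →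
      ξ d = -((ξ ((g : ℤ) - 1 - d)).conjTranspose)) :
    (∀ l : ℂ, l ≠ 0 →
        xiFun g ξ l
          = -(l ^ ((g : ℤ) - 1)) • ((xiFun g ξ ((starRingEnd ℂ l)⁻¹)).conjTranspose)) ∧
    (∀ α : ℂ, α ≠ 0 → xiFun g ξ α = 0 → xiFun g ξ ((starRingEnd ℂ α)⁻¹) = 0) ∧
    (∃ a : Polynomial ℂ, a.degree ≤ (2 * g : ℕ) ∧
        (∀ l : ℂ, l ≠ 0 → a.eval l = -l * (xiFun g ξ l).det) ∧
        (∀ l : ℂ, l ≠ 0 →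
          l ^ (2 * g) * (starRingEnd ℂ) (a.eval ((starRingEnd ℂ l)⁻¹)) = a.eval l) ∧
        (∀ l : ℂ, ‖l‖ = 1 → ∃ r : ℝ, r ≤ 0 ∧ l ^ (-(g : ℤ)) * a.eval l = (r : ℂ))) := by
  obtain ⟨c, hc⟩ := hE
  have hdet_neg_one : (ξ (-1)).det = 0 := by simp [hc, det_fin_two]
  have hdet_g : (ξ g).det = 0 := by
    rw [hreal g (by omega) le_rfl, show (g : ℤ) - 1 - g = -1 by ring, det_neg,
      det_conjTranspose, hdet_neg_one, star_zero, mul_zero]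
  obtain ⟨a, ha_deg, ha⟩ := exists_natDegree_le_eval_eq_neg_mul_det_xiFun hdet_neg_one hdet_g
  refine ⟨fun l hl => xiFun_eq_neg_zpow_smul_conjTranspose hreal hl,
    fun α hα h => xiFun_inv_conj_eq_zero hreal hα h, a, degree_le_of_natDegree_le ha_deg, ha,
    fun l hl => ?_, fun l hl => ?_⟩
  · rw [ha l hl, ha _ (by simpa using hl)]
    exact pow_mul_conj_neg_mul_det_xiFun hreal hl
  · rw [ha l (norm_ne_zero_iff.mp (hl ▸ one_ne_zero))]
    exact ⟨_, neg_nonpos.mpr (add_nonneg (normSq_nonneg _) (normSq_nonneg _)),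
      zpow_neg_mul_neg_mul_det_xiFun_of_norm_eq_one htr hreal hl⟩
end

section
/- Let g ∈ ℕ and let a ∈ ℂ[λ] be a polynomial of degree exactly 2g obeying the reality conditions. Then there exists a polynomial β ∈ ℂ[λ] of degree at most g such that a(λ) = −β(λ)·λ^g·conj(β(1/conj λ)) for all λ ∈ ℂ \ {0}; equivalently a = −β·β*, where β*(λ) = Σ_{k=0}^{g} conj(β_{g−k})·λ^k and β_j denotes the coefficient of λ^j in β. -/
/-!
Induction on `g`, with `p* := λ^N conj(p(1/conj λ))` for `deg p ≤ N`. The first reality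
condition says `a* = a`, so together with a root `α` (nonzero, since `a(0)` is the conjugate of
the leading coefficient) the polynomial `a` also vanishes at `1/conj α`. If these two roots
coincide, `α` lies on the unit circle, where `λ^(-g) a(λ)` is real, nonpositive and vanishes at
`α`; its derivative along the circle therefore vanishes at `α`, making `α` a double root. In
both cases `a = d · d* · q` with `d = λ - α`. On the unit circle `λ⁻¹ d(λ) d*(λ) = |λ - α|² ≥ 0`,
so `q` satisfies both reality conditions in degree `2(g - 1)` (at `λ = α` by continuity), and
`q = -β β*` gives `a = -(dβ)(dβ)*`.
-/

open Complex Polynomial ComplexConjugate Filter Topology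

namespace Polynomial

section StarRing

variable {R : Type*} [CommSemiring R] [StarRing R]

/-- The polynomial `p*` above; see `eval_conjReflect`. -/
noncomputable def conjReflect (N : ℕ) (p : R[X]) : R[X] := (p.map (starRingEnd R)).reflect N

theorem coeff_conjReflect (N : ℕ) (p : R[X]) (i : ℕ) :
    (p.conjReflect N).coeff i = star (p.coeff (revAt N i)) := by
  simp [conjReflect, coeff_reflect, starRingEnd_apply]

theorem conjReflect_C (N : ℕ) (c : R) : (C c).conjReflect N = C (star c) * X ^ N := by
  simp [conjReflect, reflect_C, starRingEnd_apply]

theorem conjReflect_conjReflect (N : ℕ) (p : R[X]) : (p.conjReflect N).conjReflect N = p := by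
  ext i
  simp [coeff_conjReflect, revAt_invol]

theorem natDegree_conjReflect_le {N : ℕ} {p : R[X]} (hp : p.natDegree ≤ N) :
    (p.conjReflect N).natDegree ≤ N :=
  natDegree_reflect_le.trans (max_le le_rfl (natDegree_map_le.trans hp))

theorem conjReflect_mul {M N : ℕ} {p q : R[X]} (hp : p.natDegree ≤ M) (hq : q.natDegree ≤ N) :
    (p * q).conjReflect (M + N) = p.conjReflect M * q.conjReflect N := by
  rw [conjReflect, Polynomial.map_mul, reflect_mul _ _ (natDegree_map_le.trans hp)
    (natDegree_map_le.trans hq)]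
  rfl

theorem conjReflect_mul_conjReflect_self {N : ℕ} {p : R[X]} (hp : p.natDegree ≤ N) :
    (p * p.conjReflect N).conjReflect (N + N) = p * p.conjReflect N := by
  rw [conjReflect_mul hp (natDegree_conjReflect_le hp), conjReflect_conjReflect, mul_comm]

theorem coeff_zero_ne_zero_of_conjReflect_eq_self {p : R[X]} (hp : p ≠ 0)
    (hself : p.conjReflect p.natDegree = p) : p.coeff 0 ≠ 0 := by
  rw [← hself, coeff_conjReflect, revAt_zero, star_ne_zero]
  exact leadingCoeff_ne_zero.mpr hp

end StarRing

theorem eval_conjReflect {N : ℕ} {p : ℂ[X]} (hp : p.natDegree ≤ N) {l : ℂ} (hl : l ≠ 0) :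
    (p.conjReflect N).eval l = l ^ N * conj (p.eval (conj l)⁻¹) := by
  let : Invertible l⁻¹ := invertibleOfNonzero (inv_ne_zero hl)
  have h := eval₂_reflect_mul_pow (RingHom.id ℂ) l⁻¹ N (p.map (starRingEnd ℂ))
    (natDegree_map_le.trans hp)
  have h_conj : (p.map (starRingEnd ℂ)).eval l⁻¹ = conj (p.eval (conj l)⁻¹) := by
    rw [← eval_map_apply, map_inv₀, conj_conj]
  rw [invOf_eq_inv, inv_inv, ← eval, ← eval, h_conj] at h
  rw [conjReflect, ← h, inv_pow, mul_left_comm, mul_inv_cancel₀ (pow_ne_zero N hl), mul_one]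

theorem conjReflect_eq_self_of_eval {N : ℕ} {p : ℂ[X]} (hp : p.natDegree ≤ N)
    (h : ∀ l : ℂ, l ≠ 0 → l ^ N * conj (p.eval (conj l)⁻¹) = p.eval l) :
    p.conjReflect N = p := by
  refine eq_of_infinite_eval_eq _ _ ((Set.finite_singleton 0).infinite_compl.mono ?_)
  intro l hl
  exact (eval_conjReflect hp hl).trans (h l hl)

theorem IsRoot.conjReflect {N : ℕ} {p : ℂ[X]} (hp : p.natDegree ≤ N) {α : ℂ} (hα : α ≠ 0)
    (h : p.IsRoot α) : (p.conjReflect N).IsRoot (conj α)⁻¹ := by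
  rw [IsRoot, eval_conjReflect hp (by simpa using hα), map_inv₀, conj_conj, inv_inv, h.eq_zero,
    map_zero, mul_zero]

theorem eval_conjReflect_of_norm_eq_one {N : ℕ} {p : ℂ[X]} (hp : p.natDegree ≤ N) {l : ℂ}
    (hl : ‖l‖ = 1) : (p.conjReflect N).eval l = l ^ N * conj (p.eval l) := by
  rw [eval_conjReflect hp (norm_ne_zero_iff.mp (hl ▸ one_ne_zero)),
    ← inv_eq_conj hl, inv_inv]

theorem eval_mul_conjReflect_of_norm_eq_one {N : ℕ} {p : ℂ[X]} (hp : p.natDegree ≤ N) {l : ℂ}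
    (hl : ‖l‖ = 1) : (p * p.conjReflect N).eval l = l ^ N * (‖p.eval l‖ : ℂ) ^ 2 := by
  rw [eval_mul, eval_conjReflect_of_norm_eq_one hp hl, mul_left_comm, mul_conj']

theorem conjReflect_X_sub_C {α : ℂ} (hα : α ≠ 0) :
    (X - C α).conjReflect 1 = C (-conj α) * (X - C (conj α)⁻¹) := by
  have : conj α ≠ 0 := by simpa using hα
  simp only [conjReflect, Polynomial.map_sub, map_X, map_C, reflect_sub, reflect_C, pow_one]
  rw [show reflect 1 (X : ℂ[X]) = 1 by simp, mul_sub, ← C_mul, neg_mul, mul_inv_cancel₀ this,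
    C_neg, C_neg, C_1]
  ring

theorem X_sub_C_mul_conjReflect_dvd {N : ℕ} {a : ℂ[X]} {α : ℂ} (hα : α ≠ 0)
    (ha : a.natDegree ≤ N) (hself : a.conjReflect N = a) (hroot : a.IsRoot α)
    (hderiv : ‖α‖ = 1 → a.derivative.IsRoot α) :
    (X - C α) * (X - C α).conjReflect 1 ∣ a := by
  have hroot' : a.IsRoot (conj α)⁻¹ := hself ▸ hroot.conjReflect ha hα
  obtain ⟨q, rfl⟩ := dvd_iff_isRoot.mpr hroot
  rw [conjReflect_X_sub_C hα]
  refine mul_dvd_mul_left _ ((C_mul_dvd (by simpa using hα)).mpr (dvd_iff_isRoot.mpr ?_))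
  by_cases h : (conj α)⁻¹ = α
  · have hnorm : ‖α‖ = 1 := by
      have h_sq : ((‖α‖ ^ 2 : ℝ) : ℂ) = 1 := by
        nth_rw 1 [ofReal_pow, ← mul_conj', ← h]
        exact inv_mul_cancel₀ (by simpa using hα)
      exact (pow_eq_one_iff_of_nonneg (norm_nonneg α) two_ne_zero).mp (by exact_mod_cast h_sq)
    simpa [h, derivative_mul] using hderiv hnorm
  · simpa [sub_eq_zero, h] using hroot'

end Polynomial

section ComplexOrder

open scoped ComplexOrder

theorem HasDerivAt.eq_zero_of_forall_nonpos {F : ℝ → ℂ} {D : ℂ} {t : ℝ}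
    (hF : HasDerivAt F D t) (hnonpos : ∀ s, F s ≤ 0) (hzero : F t = 0) : D = 0 := by
  have hre : HasDerivAt (fun s => (F s).re) D.re t := reCLM.hasFDerivAt.comp_hasDerivAt t hF
  have him : HasDerivAt (fun s => (F s).im) D.im t := imCLM.hasFDerivAt.comp_hasDerivAt t hF
  have hmax : IsLocalMax (fun s => (F s).re) t :=
    Eventually.of_forall fun s => by simpa [hzero] using (nonpos_iff.mp (hnonpos s)).1
  have him_zero : (fun s => (F s).im) = fun _ => 0 := funext fun s => (nonpos_iff.mp (hnonpos s)).2
  rw [him_zero] at him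
  exact Complex.ext (hmax.hasDerivAt_eq_zero hre) (him.unique (hasDerivAt_const t 0))

theorem Complex.hasDerivAt_mul_exp_mul_I (α : ℂ) :
    HasDerivAt (fun t : ℝ => α * exp (t * I)) (α * I) 0 := by
  simpa using (((hasDerivAt_id (0 : ℝ)).ofReal_comp.mul_const I).cexp).const_mul α

theorem Complex.norm_mul_exp_mul_I {α : ℂ} (hα : ‖α‖ = 1) (t : ℝ) :
    ‖α * exp (t * I)‖ = 1 := by
  rw [norm_mul, hα, norm_exp_ofReal_mul_I, one_mul]

theorem Complex.nonpos_of_nonpos_on_circle_of_ne {f : ℂ → ℂ} {α : ℂ} (hα : ‖α‖ = 1)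
    (hf : ContinuousAt f α) (h : ∀ l : ℂ, ‖l‖ = 1 → l ≠ α → f l ≤ 0) : f α ≤ 0 := by
  have hw : Tendsto (fun t : ℝ => α * exp (t * I)) (𝓝[>] 0) (𝓝 α) := by
    simpa using (hasDerivAt_mul_exp_mul_I α).continuousAt.tendsto.mono_left nhdsWithin_le_nhds
  refine le_of_tendsto (hf.tendsto.comp hw) ?_
  filter_upwards [Ioo_mem_nhdsGT Real.pi_pos] with t ht
  refine h _ (norm_mul_exp_mul_I hα t) fun heq => ?_
  have : (exp (t * I)).im = 0 := by
    rw [mul_eq_left₀ (norm_ne_zero_iff.mp (hα ▸ one_ne_zero))] at heq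
    simp [heq]
  rw [exp_ofReal_mul_I_im] at this
  exact (Real.sin_pos_of_pos_of_lt_pi ht.1 ht.2).ne' this

namespace Polynomial

theorem derivative_isRoot_of_nonpos_on_circle {a : ℂ[X]} {α : ℂ} (N : ℤ)
    (hα : ‖α‖ = 1) (hroot : a.IsRoot α)
    (hnonpos : ∀ l : ℂ, ‖l‖ = 1 → l ^ N * a.eval l ≤ 0) : a.derivative.IsRoot α := by
  have hα0 : α ≠ 0 := norm_ne_zero_iff.mp (hα ▸ one_ne_zero)
  have hG : HasDerivAt (fun z => z ^ N * a.eval z) (α ^ N * a.derivative.eval α) α := by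
    simpa [hroot.eq_zero] using (hasDerivAt_zpow N α (Or.inl hα0)).fun_mul (a.hasDerivAt α)
  have hw := hasDerivAt_mul_exp_mul_I α
  have hcomp := (show HasDerivAt _ _ (α * exp ((0 : ℝ) * I)) by simpa using hG).comp 0 hw
  have hD := hcomp.eq_zero_of_forall_nonpos (fun t => hnonpos _ (norm_mul_exp_mul_I hα t))
    (by simp [hroot.eq_zero])
  simpa [hα0, I_ne_zero, zpow_ne_zero N hα0] using hD

theorem nonpos_on_circle_of_X_sub_C_mul_conjReflect_mul {α : ℂ} {q : ℂ[X]} {M : ℕ}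
    (h : ∀ l : ℂ, ‖l‖ = 1 →
      l ^ (-((M + 1 : ℕ) : ℤ)) * ((X - C α) * (X - C α).conjReflect 1 * q).eval l ≤ 0) :
    ∀ l : ℂ, ‖l‖ = 1 → l ^ (-(M : ℤ)) * q.eval l ≤ 0 := by
  have hoff : ∀ l : ℂ, ‖l‖ = 1 → l ≠ α → l ^ (-(M : ℤ)) * q.eval l ≤ 0 := by
    intro l hl hlα
    have hl0 : l ≠ 0 := norm_ne_zero_iff.mp (hl ▸ one_ne_zero)
    have hzpow : l ^ (-((M + 1 : ℕ) : ℤ)) * l = l ^ (-(M : ℤ)) := by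
      rw [← zpow_add_one₀ hl0]
      push_cast
      ring_nf
    have hprod : l ^ (-((M + 1 : ℕ) : ℤ)) * ((X - C α) * (X - C α).conjReflect 1 * q).eval l =
        (‖l - α‖ : ℂ) ^ 2 * (l ^ (-(M : ℤ)) * q.eval l) := by
      rw [eval_mul, eval_mul_conjReflect_of_norm_eq_one (natDegree_X_sub_C α).le hl, pow_one,
        ← hzpow, eval_sub, eval_X, eval_C]
      ring
    have hpos : (0 : ℂ) < (‖l - α‖ : ℂ) ^ 2 := by
      exact_mod_cast pow_pos (norm_pos_iff.mpr (sub_ne_zero.mpr hlα)) 2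
    exact le_of_mul_le_mul_left (by rw [mul_zero, ← hprod]; exact h l hl) hpos
  intro l hl
  by_cases hlα : l = α
  · subst hlα
    exact nonpos_of_nonpos_on_circle_of_ne (f := fun z => z ^ (-(M : ℤ)) * q.eval z) hl
      ((continuousAt_zpow₀ l _ (Or.inl (norm_ne_zero_iff.mp (hl ▸ one_ne_zero)))).mul
        q.continuousAt) hoff
  · exact hoff l hl hlα

theorem exists_C_eq_neg_mul_conjReflect {c : ℂ} (hc : c ≤ 0) :
    ∃ β : ℂ[X], β.natDegree ≤ 0 ∧ C c = -(β * β.conjReflect 0) := by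
  have hc_re : (c.re : ℂ) = c := Complex.ext rfl (nonpos_iff.mp hc).2.symm
  refine ⟨C ((√(-c.re) : ℝ) : ℂ), by simp, ?_⟩
  rw [conjReflect_C, pow_zero, mul_one, ← C_mul, ← C_neg, star_def, conj_ofReal, ← ofReal_mul,
    Real.mul_self_sqrt (neg_nonneg.mpr (nonpos_iff.mp hc).1), ofReal_neg, neg_neg, hc_re]

theorem exists_eq_X_sub_C_mul_conjReflect_mul {g : ℕ} {a : ℂ[X]}
    (hdeg : a.degree = (2 * (g + 1) : ℕ)) (hself : a.conjReflect (2 * (g + 1)) = a)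
    (hnonpos : ∀ l : ℂ, ‖l‖ = 1 → l ^ (-((g + 1 : ℕ) : ℤ)) * a.eval l ≤ 0) :
    ∃ (α : ℂ) (q : ℂ[X]), a = (X - C α) * (X - C α).conjReflect 1 * q ∧
      q.degree = (2 * g : ℕ) ∧ q.conjReflect (2 * g) = q := by
  have hnat : a.natDegree = 2 * (g + 1) := natDegree_eq_of_degree_eq_some hdeg
  have ha : a ≠ 0 := ne_zero_of_natDegree_gt (n := 0) (by omega)
  obtain ⟨α, hroot⟩ := exists_root (f := a) (by rw [hdeg]; exact_mod_cast (by omega))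
  have hα : α ≠ 0 := by
    rintro rfl
    exact coeff_zero_ne_zero_of_conjReflect_eq_self ha (hnat ▸ hself)
      (by rwa [coeff_zero_eq_eval_zero])
  obtain ⟨q, rfl⟩ := X_sub_C_mul_conjReflect_dvd hα hnat.le hself hroot
    fun hα1 => derivative_isRoot_of_nonpos_on_circle _ hα1 hroot hnonpos
  have hq : q ≠ 0 := right_ne_zero_of_mul ha
  have hd : (X - C α).natDegree = 1 := natDegree_X_sub_C α
  have hd' : ((X - C α).conjReflect 1).natDegree = 1 := by
    rw [conjReflect_X_sub_C hα, natDegree_C_mul (by simpa using hα), natDegree_X_sub_C]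
  have hm : (X - C α) * (X - C α).conjReflect 1 ≠ 0 :=
    mul_ne_zero (X_sub_C_ne_zero α) (ne_zero_of_natDegree_gt (hd' ▸ zero_lt_one))
  have hq_nat : q.natDegree = 2 * g := by
    rw [natDegree_mul hm hq, natDegree_mul (X_sub_C_ne_zero α) (right_ne_zero_of_mul hm), hd,
      hd'] at hnat
    omega
  refine ⟨α, q, rfl, (degree_eq_iff_natDegree_eq hq).mpr hq_nat, ?_⟩
  have h := conjReflect_mul (natDegree_mul_le_of_le hd.le hd'.le) hq_nat.le
  rw [conjReflect_mul_conjReflect_self hd.le, show 1 + 1 + 2 * g = 2 * (g + 1) by ring] at h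
  exact mul_left_cancel₀ hm (h.symm.trans hself)

theorem exists_eq_neg_mul_conjReflect (g : ℕ) {a : ℂ[X]} (hdeg : a.degree = (2 * g : ℕ))
    (hself : a.conjReflect (2 * g) = a)
    (hnonpos : ∀ l : ℂ, ‖l‖ = 1 → l ^ (-(g : ℤ)) * a.eval l ≤ 0) :
    ∃ β : ℂ[X], β.natDegree ≤ g ∧ a = -(β * β.conjReflect g) := by
  induction g generalizing a with
  | zero =>
    rw [eq_C_of_degree_le_zero hdeg.le] at hnonpos ⊢
    exact exists_C_eq_neg_mul_conjReflect (by simpa using hnonpos 1 (by simp))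
  | succ g ih =>
    obtain ⟨α, q, rfl, hq_deg, hq_self⟩ := exists_eq_X_sub_C_mul_conjReflect_mul hdeg hself hnonpos
    obtain ⟨β, hβ, rfl⟩ :=
      ih hq_deg hq_self (nonpos_on_circle_of_X_sub_C_mul_conjReflect_mul hnonpos)
    have hd := (natDegree_X_sub_C α).le
    refine ⟨(X - C α) * β, (natDegree_mul_le_of_le hd hβ).trans_eq (add_comm 1 g), ?_⟩
    rw [add_comm g 1, conjReflect_mul hd hβ]
    ring

end Polynomial

end ComplexOrder

/-- A polynomial `a` of degree `2g` obeying the reality conditions factors as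
`a(λ) = -β(λ) λ^g conj(β(1/conj λ))` for some polynomial `β` of degree at most `g`. -/
theorem reality_polynomial_factorization (g : ℕ) (a : Polynomial ℂ)
    (hdeg : a.degree = (2 * g : ℕ))
    (hreal : ∀ l : ℂ, l ≠ 0 →
      l ^ (2 * g) * (starRingEnd ℂ) (a.eval ((starRingEnd ℂ l)⁻¹)) = a.eval l)
    (hneg : ∀ l : ℂ, ‖l‖ = 1 → ∃ r : ℝ, r ≤ 0 ∧ l ^ (-(g : ℤ)) * a.eval l = (r : ℂ)) :
    ∃ β : Polynomial ℂ, β.degree ≤ (g : ℕ) ∧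
      ∀ l : ℂ, l ≠ 0 →
        a.eval l = -(β.eval l * l ^ g * (starRingEnd ℂ) (β.eval ((starRingEnd ℂ l)⁻¹))) := by
  have hself := conjReflect_eq_self_of_eval (natDegree_le_of_degree_le hdeg.le) hreal
  obtain ⟨β, hβ, rfl⟩ := exists_eq_neg_mul_conjReflect g hdeg hself fun l hl => by
      obtain ⟨r, hr, h⟩ := hneg l hl
      rw [h]
      exact_mod_cast hr
  refine ⟨β, natDegree_le_iff_degree_le.mp hβ, fun l hl => ?_⟩
  rw [eval_neg, eval_mul, eval_conjReflect hβ hl]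
  ring
end

section
/- Let H ≥ 0 be a real number, set s = √(H² + 1), λ₁ = (H − i)/s, λ₂ = (H + i)/s, and let β₀ > 0 satisfy β₀² = π²·s/(2s + 2H). Then for a complex number λ with |λ| = 1 and an integer l, the equation β₀²·(λ + λ⁻¹) = π²·l² − 2β₀² holds if and only if either l = 0 and λ = −1, or l² = 1 and λ ∈ {λ₁, λ₂}. -/
open Complex Real

/-! On the unit circle `λ + λ⁻¹ = 2 Re λ`, and the choice of `β₀` turns the equation into
`s (Re λ + 1) = l² (s + H)` with `s = √(H² + 1)`. As `Re λ ≤ 1` and `H ≥ 0`, this forces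
`l² ≤ 2`, so either `l = 0` and `Re λ = -1`, or `l² = 1` and `Re λ = H / s`. A unimodular
number is determined by its real part up to conjugation, and `(H ∓ i) / s` are the unimodular
numbers with real part `H / s`. -/

open ComplexConjugate

namespace Complex

lemma add_inv_eq_two_mul_re {z : ℂ} (hz : ‖z‖ = 1) : z + z⁻¹ = 2 * z.re := by
  rw [inv_eq_conj hz, add_conj]
  push_cast
  ring

lemma re_eq_re_iff_eq_or_eq_conj {z w : ℂ} (hz : ‖z‖ = 1) (hw : ‖w‖ = 1) :
    z.re = w.re ↔ z = w ∨ z = conj w := by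
  constructor
  · intro hre
    have him : z.im ^ 2 = w.im ^ 2 := by
      have hz2 := Complex.sq_norm z
      have hw2 := Complex.sq_norm w
      rw [hz, normSq_apply, hre] at hz2
      rw [hw, normSq_apply] at hw2
      linear_combination hw2 - hz2
    rcases sq_eq_sq_iff_eq_or_eq_neg.1 him with him | him
    · exact Or.inl (Complex.ext hre him)
    · exact Or.inr (Complex.ext (by simpa using hre) (by simpa using him))
  · rintro (rfl | rfl) <;> simp

lemma norm_ofReal_sub_I_div_sqrt (H : ℝ) : ‖((H : ℂ) - I) / (√(H ^ 2 + 1) : ℝ)‖ = 1 := by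
  have hs : 0 < √(H ^ 2 + 1) := Real.sqrt_pos.2 (by positivity)
  have hnum : ‖(H : ℂ) - I‖ = √(H ^ 2 + 1) := by
    simpa [sub_eq_add_neg] using Complex.norm_add_mul_I H (-1)
  rw [norm_div, hnum, norm_real, Real.norm_of_nonneg hs.le, div_self hs.ne']

end Complex

lemma sq_mul_eq_sub_iff_mul_add_one_eq {β c s H x N : ℝ} (hc : c ≠ 0) (hsH : 0 < s + H)
    (hβ : β ^ 2 = c ^ 2 * s / (2 * s + 2 * H)) :
    β ^ 2 * (2 * x) = c ^ 2 * N - 2 * β ^ 2 ↔ s * (x + 1) = N * (s + H) := by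
  have hβ' : β ^ 2 * (2 * s + 2 * H) = c ^ 2 * s := by
    rw [hβ, div_mul_cancel₀ _ (by linarith)]
  constructor
  · intro h
    apply mul_left_cancel₀ (pow_ne_zero 2 hc)
    linear_combination (s + H) * h - (x + 1) * hβ'
  · intro h
    apply mul_left_cancel₀ hsH.ne'
    linear_combination c ^ 2 * h + (x + 1) * hβ'

lemma mul_add_one_eq_sq_mul_iff {s H x : ℝ} {n : ℤ} (hs : 0 < s) (hH : 0 ≤ H) (hx : x ≤ 1) :
    s * (x + 1) = n ^ 2 * (s + H) ↔ (n = 0 ∧ x = -1) ∨ (n ^ 2 = 1 ∧ s * x = H) := by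
  constructor
  · intro h
    have hn : n = -1 ∨ n = 0 ∨ n = 1 := by
      have hsq : (n : ℝ) ^ 2 ≤ 2 := by nlinarith
      have hsq : n ^ 2 ≤ 2 := by exact_mod_cast hsq
      have : -1 ≤ n ∧ n ≤ 1 := by constructor <;> nlinarith
      omega
    rcases hn with rfl | rfl | rfl
    · push_cast at h
      exact Or.inr ⟨by norm_num, by linarith⟩
    · simpa [hs.ne', eq_neg_iff_add_eq_zero] using h
    · push_cast at h
      exact Or.inr ⟨by norm_num, by linarith⟩
  · rintro (⟨rfl, rfl⟩ | ⟨hn, hsx⟩)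
    · simp
    · rw [show (n : ℝ) ^ 2 = 1 by exact_mod_cast hn]
      linarith

theorem genus_zero_roots_of_mu_squared_minus_one_general (H : ℝ) (hH : 0 ≤ H)
    (β₀ : ℝ)
    (hβsq : β₀ ^ 2 = π ^ 2 * Real.sqrt (H ^ 2 + 1)
      / (2 * Real.sqrt (H ^ 2 + 1) + 2 * H))
    (l : ℂ) (hl : ‖l‖ = 1) (n : ℤ) :
    (β₀ : ℂ) ^ 2 * (l + l⁻¹) = (π : ℂ) ^ 2 * (n : ℂ) ^ 2 - 2 * (β₀ : ℂ) ^ 2 ↔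
      (n = 0 ∧ l = -1) ∨
      (n ^ 2 = 1 ∧
        (l = ((H : ℂ) - Complex.I) / (Real.sqrt (H ^ 2 + 1) : ℝ) ∨
         l = ((H : ℂ) + Complex.I) / (Real.sqrt (H ^ 2 + 1) : ℝ))) := by
  set s := √(H ^ 2 + 1)
  have hs : 0 < s := Real.sqrt_pos.2 (by positivity)
  have hconj : conj (((H : ℂ) - I) / (s : ℂ)) = ((H : ℂ) + I) / (s : ℂ) := by
    simp
  have hre : (((H : ℂ) - I) / (s : ℂ)).re = H / s := by simp
  have hw := norm_ofReal_sub_I_div_sqrt H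
  have hneg : l = -1 ↔ l.re = -1 := by
    simpa using (re_eq_re_iff_eq_or_eq_conj hl (w := -1) (by simp)).symm
  rw [← hconj, add_inv_eq_two_mul_re hl, ← re_eq_re_iff_eq_or_eq_conj hl hw, hre, hneg]
  have hreal : (β₀ : ℂ) ^ 2 * (2 * l.re) = (π : ℂ) ^ 2 * (n : ℂ) ^ 2 - 2 * (β₀ : ℂ) ^ 2 ↔
      β₀ ^ 2 * (2 * l.re) = π ^ 2 * (n : ℝ) ^ 2 - 2 * β₀ ^ 2 := by
    exact_mod_cast Iff.rfl
  rw [hreal, sq_mul_eq_sub_iff_mul_add_one_eq pi_ne_zero (by positivity) hβsq,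
    mul_add_one_eq_sq_mul_iff hs hH ((re_le_norm l).trans hl.le), eq_div_iff hs.ne', mul_comm]

/-- In the spectral-genus-zero rotational family with mean curvature `H ≥ 0`, the unimodular
solutions `λ` of `β₀²(λ + λ⁻¹) = π² l² - 2β₀²` with `l ∈ ℤ` are exactly `λ = -1` (with `l = 0`)
and the two Sym points `λ₁ = (H-i)/√(H²+1)`, `λ₂ = (H+i)/√(H²+1)` (with `l² = 1`). -/
theorem genus_zero_roots_of_mu_squared_minus_one (H : ℝ) (hH : 0 ≤ H)
    (β₀ : ℝ) (hβpos : 0 < β₀)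
    (hβsq : β₀ ^ 2 = π ^ 2 * Real.sqrt (H ^ 2 + 1)
      / (2 * Real.sqrt (H ^ 2 + 1) + 2 * H))
    (l : ℂ) (hl : ‖l‖ = 1) (n : ℤ) :
    (β₀ : ℂ) ^ 2 * (l + l⁻¹) = (π : ℂ) ^ 2 * (n : ℂ) ^ 2 - 2 * (β₀ : ℂ) ^ 2 ↔
      (n = 0 ∧ l = -1) ∨
      (n ^ 2 = 1 ∧
        (l = ((H : ℂ) - Complex.I) / (Real.sqrt (H ^ 2 + 1) : ℝ) ∨
         l = ((H : ℂ) + Complex.I) / (Real.sqrt (H ^ 2 + 1) : ℝ))) :=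
  genus_zero_roots_of_mu_squared_minus_one_general H hH β₀ hβsq l hl n
end

section
/- Let H ≥ 0 and α > 2 be real numbers, set s = √(H² + 1), λ₁ = (H − i)/s, λ₂ = (H + i)/s, and let β₁² = π²·s/(2H + α·s). Then for every complex number λ with |λ| = 1 the number β₁²·(λ + α + λ⁻¹) is real and satisfies 0 < β₁²·(λ + α + λ⁻¹) ≤ 2π²; moreover, for λ unimodular and l an integer, the equation β₁²·(λ + α + λ⁻¹) = π²·l² holds if and only if l² = 1 and λ ∈ {λ₁, λ₂}. -/
open Complex Real

/-!
On the unit circle `λ + λ⁻¹ = 2 Re λ`, so `β₁²(λ + α + λ⁻¹) = β₁²(2x + α)` with `x = Re λ ∈ [-1, 1]`.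
For `α > 2` this is positive and at most `β₁²(2 + α) ≤ 2π²`, so `π² l²` can only be hit with
`l² = 1`. Clearing the denominator of `β₁²`, the equation `β₁²(2x + α) = π²` becomes
`x √(H² + 1) = H`, and together with `|λ| = 1` this forces `Im λ · √(H² + 1) = ±1`,
i.e. `λ` is one of the Sym points `(H ∓ i)/√(H² + 1)`.
-/

theorem Complex.add_inv_eq_two_mul_re_of_norm_eq_one {z : ℂ} (hz : ‖z‖ = 1) :
    z + z⁻¹ = (2 * z.re : ℝ) := by
  rw [inv_eq_conj hz, add_conj]

theorem Complex.re_sq_add_im_sq_of_norm_eq_one {z : ℂ} (hz : ‖z‖ = 1) :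
    z.re ^ 2 + z.im ^ 2 = 1 := by
  rw [sq, sq, ← normSq_apply, normSq_eq_norm_sq, hz, one_pow]

theorem Int.sq_eq_one_of_pos_of_le_two {n : ℤ} (hpos : 0 < n ^ 2) (hle : n ^ 2 ≤ 2) :
    n ^ 2 = 1 := by
  have hlo : -1 ≤ n := by nlinarith
  have hhi : n ≤ 1 := by nlinarith
  interval_cases n <;> simp_all

theorem Complex.re_mul_sqrt_eq_iff_eq_sym_point {z : ℂ} (hz : ‖z‖ = 1) (H : ℝ) :
    z.re * √(H ^ 2 + 1) = H ↔
      z = (H - I) / (√(H ^ 2 + 1) : ℝ) ∨ z = (H + I) / (√(H ^ 2 + 1) : ℝ) := by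
  set s := √(H ^ 2 + 1)
  have hs2 : s ^ 2 = H ^ 2 + 1 := sq_sqrt (by positivity)
  have hs : (s : ℂ) ≠ 0 := ofReal_ne_zero.2 (sqrt_pos.2 (by positivity)).ne'
  have hmul (w : ℂ) : z = w / s ↔ z.re * s = w.re ∧ z.im * s = w.im := by
    rw [eq_div_iff hs, Complex.ext_iff]
    simp
  simp only [hmul, sub_re, add_re, sub_im, add_im, ofReal_re, ofReal_im, I_re, I_im]
  constructor
  · intro hre
    have him : (z.im * s - 1) * (z.im * s + 1) = 0 := by
      linear_combination s ^ 2 * re_sq_add_im_sq_of_norm_eq_one hz - (z.re * s + H) * hre + hs2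
    rcases mul_eq_zero.1 him with h | h
    · exact Or.inr ⟨by linarith, by linarith⟩
    · exact Or.inl ⟨by linarith, by linarith⟩
  · rintro (⟨h, -⟩ | ⟨h, -⟩) <;> linarith

/-- The constant `β₁²` of the spectral-genus-one rotational family. -/
noncomputable def genusOneBetaSq (H α : ℝ) : ℝ :=
  π ^ 2 * √(H ^ 2 + 1) / (2 * H + α * √(H ^ 2 + 1))

section genusOneBetaSq

variable {H α : ℝ}

/-- Because `√(H² + 1) > |H|`, the denominator of `β₁²` is positive once `α > 2`. -/
theorem two_mul_add_mul_sqrt_pos (hα : 2 < α) : 0 < 2 * H + α * √(H ^ 2 + 1) := by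
  have habs : |H| < √(H ^ 2 + 1) := by
    rw [← sqrt_sq_eq_abs]
    exact sqrt_lt_sqrt (sq_nonneg H) (lt_add_one _)
  nlinarith [neg_abs_le H, abs_nonneg H]

theorem genusOneBetaSq_pos (hα : 2 < α) : 0 < genusOneBetaSq H α :=
  div_pos (by positivity) (two_mul_add_mul_sqrt_pos hα)

theorem genusOneBetaSq_mul_eq_pi_sq_iff (hα : 2 < α) (x : ℝ) :
    genusOneBetaSq H α * (2 * x + α) = π ^ 2 ↔ x * √(H ^ 2 + 1) = H := by
  have hden := (two_mul_add_mul_sqrt_pos (H := H) hα).ne'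
  rw [genusOneBetaSq, div_mul_eq_mul_div, div_eq_iff hden]
  have hπ : π ^ 2 * 2 ≠ 0 := by positivity
  constructor
  · intro h
    exact mul_left_cancel₀ hπ (by linear_combination h)
  · intro h
    linear_combination π ^ 2 * 2 * h

theorem genusOneBetaSq_mul_mem_Ioc (hH : 0 ≤ H) (hα : 2 < α) {x : ℝ} (hx : |x| ≤ 1) :
    genusOneBetaSq H α * (2 * x + α) ∈ Set.Ioc 0 (2 * π ^ 2) := by
  obtain ⟨hlo, hhi⟩ := abs_le.1 hx
  refine ⟨mul_pos (genusOneBetaSq_pos hα) (by linarith), ?_⟩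
  have hden := two_mul_add_mul_sqrt_pos (H := H) hα
  have hs : 0 ≤ √(H ^ 2 + 1) := sqrt_nonneg _
  rw [genusOneBetaSq, div_mul_eq_mul_div, div_le_iff₀ hden]
  nlinarith [pi_pos, mul_nonneg (sq_nonneg π) hs]

theorem genusOneBetaSq_mul_eq_pi_sq_mul_sq_iff (hH : 0 ≤ H) (hα : 2 < α) {x : ℝ} (hx : |x| ≤ 1)
    (n : ℤ) :
    genusOneBetaSq H α * (2 * x + α) = π ^ 2 * (n : ℝ) ^ 2 ↔
      n ^ 2 = 1 ∧ x * √(H ^ 2 + 1) = H := by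
  rw [← genusOneBetaSq_mul_eq_pi_sq_iff hα]
  obtain ⟨hpos, hle⟩ := genusOneBetaSq_mul_mem_Ioc hH hα hx
  constructor
  · intro h
    have hπ : 0 < π ^ 2 := by positivity
    rw [h] at hpos hle
    have hn : n ^ 2 = 1 := by
      refine Int.sq_eq_one_of_pos_of_le_two ?_ ?_
      · exact_mod_cast pos_of_mul_pos_right hpos hπ.le
      · have : (n : ℝ) ^ 2 ≤ 2 := le_of_mul_le_mul_left (by linarith) hπ
        exact_mod_cast this
    refine ⟨hn, ?_⟩
    rw [h]
    norm_cast
    rw [hn, Int.cast_one, mul_one]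
  · rintro ⟨hn, h⟩
    rw [h]
    norm_cast
    rw [hn, Int.cast_one, mul_one]

end genusOneBetaSq

/-- In the spectral-genus-one rotational family with `H ≥ 0` and `α > 2`, the quantity
`β₁²(λ + α + λ⁻¹)` is real with `0 < β₁²(λ + α + λ⁻¹) ≤ 2π²` for every unimodular `λ`, and
the equation `β₁²(λ + α + λ⁻¹) = π² l²` with `l ∈ ℤ` and `|λ| = 1` holds exactly for
`l² = 1` and `λ` one of the two Sym points. -/
theorem genus_one_roots_of_mu_squared_minus_one (H α : ℝ) (hH : 0 ≤ H) (hα : 2 < α)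
    (b : ℝ)
    (hb : b = π ^ 2 * Real.sqrt (H ^ 2 + 1) / (2 * H + α * Real.sqrt (H ^ 2 + 1))) :
    (∀ l : ℂ, ‖l‖ = 1 →
      ∃ r : ℝ, 0 < r ∧ r ≤ 2 * π ^ 2 ∧ (b : ℂ) * (l + (α : ℂ) + l⁻¹) = (r : ℂ)) ∧
    (∀ l : ℂ, ‖l‖ = 1 → ∀ n : ℤ,
      ((b : ℂ) * (l + (α : ℂ) + l⁻¹) = (π : ℂ) ^ 2 * (n : ℂ) ^ 2 ↔
        n ^ 2 = 1 ∧
          (l = ((H : ℂ) - Complex.I) / (Real.sqrt (H ^ 2 + 1) : ℝ) ∨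
           l = ((H : ℂ) + Complex.I) / (Real.sqrt (H ^ 2 + 1) : ℝ)))) := by
  have hb' : b = genusOneBetaSq H α := hb
  subst hb'
  have hreal {l : ℂ} (hl : ‖l‖ = 1) :
      (genusOneBetaSq H α : ℂ) * (l + α + l⁻¹) = (genusOneBetaSq H α * (2 * l.re + α) : ℝ) := by
    rw [add_right_comm, add_inv_eq_two_mul_re_of_norm_eq_one hl]
    push_cast
    ring
  have hre {l : ℂ} (hl : ‖l‖ = 1) : |l.re| ≤ 1 := hl ▸ abs_re_le_norm l
  refine ⟨fun l hl => ?_, fun l hl n => ?_⟩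
  · obtain ⟨hpos, hle⟩ := genusOneBetaSq_mul_mem_Ioc hH hα (hre hl)
    exact ⟨_, hpos, hle, hreal hl⟩
  · rw [hreal hl, ← re_mul_sqrt_eq_iff_eq_sym_point hl,
      ← genusOneBetaSq_mul_eq_pi_sq_mul_sq_iff hH hα (hre hl)]
    exact_mod_cast Iff.rfl
end

section
/- Let g ∈ ℕ, let I ⊆ ℝ be an open interval, and let U ⊆ ℂ \ {0} be a nonempty open set. For each t ∈ I let a_t, b_t, c_t ∈ ℂ[λ] be polynomials of degrees at most 2g, g+1 and g+1 respectively, whose coefficients are continuously differentiable functions of t. Suppose ν : U × I → ℂ is continuously differentiable, nowhere zero, holomorphic in λ for each fixed t, and satisfies ν(λ,t)² = a_t(λ)/λ on U × I. Suppose h : U × I → ℂ is twice continuously differentiable, holomorphic in λ for each fixed t, with ∂h/∂λ(λ,t) = b_t(λ)/(ν(λ,t)·λ²) and ∂h/∂t(λ,t) = c_t(λ)/(ν(λ,t)·λ) on U × I. Then for every t ∈ I the polynomial identity 2·ḃ_t·a_t − b_t·ȧ_t = 2λ·a_t·c_t′ − a_t·c_t − λ·a_t′·c_t holds in ℂ[λ],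 where ′ denotes the derivative with respect to λ and ˙ denotes the coefficientwise derivative with respect to t. -/
/-!
Because `h` is `C²`, its mixed partial derivatives `∂ₜ∂_λ h` and `∂_λ∂ₜ h` agree, and holomorphy
in `λ` identifies the complex `λ`-derivative with the real partial derivative in direction `1`.
Computing both mixed partials by the quotient rule and eliminating `∂ₜν` and `∂_λν` through the
derivatives of `ν² = a/λ` gives the identity at every `λ ∈ U` (after multiplying by `2νλ`).
Both sides are polynomials in `λ` and `U` is infinite, so the identity holds for all `λ`.
-/

open Polynomial Filter Topology

section

variable {𝕜 R : Type*} [NontriviallyNormedField 𝕜] [NormedRing R] [NormedAlgebra 𝕜 R]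

/-- The paper's `ṗ_t`, provided `deg p_s ≤ d` for `s` near `t`. -/
noncomputable def Polynomial.coeffwiseDeriv (p : 𝕜 → R[X]) (d : ℕ) (t : 𝕜) : R[X] :=
  ∑ n ∈ Finset.range (d + 1), C (deriv (fun s => (p s).coeff n) t) * X ^ n

theorem Polynomial.hasDerivAt_eval_coeffwiseDeriv {p : 𝕜 → R[X]} {d : ℕ} {t : 𝕜}
    (hdeg : ∀ᶠ s in 𝓝 t, (p s).degree ≤ d)
    (hcoeff : ∀ n ≤ d, DifferentiableAt 𝕜 (fun s => (p s).coeff n) t) (x : R) :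
    HasDerivAt (fun s => (p s).eval x) ((coeffwiseDeriv p d t).eval x) t := by
  have hsum : HasDerivAt (fun s => ∑ n ∈ Finset.range (d + 1), (p s).coeff n * x ^ n)
      ((coeffwiseDeriv p d t).eval x) t := by
    simp only [coeffwiseDeriv, eval_finsetSum, eval_C_mul, eval_X_pow]
    exact HasDerivAt.fun_sum fun n hn =>
      (hcoeff n (Nat.lt_succ_iff.mp (Finset.mem_range.mp hn))).hasDerivAt.mul_const _
  refine hsum.congr_of_eventuallyEq ?_
  filter_upwards [hdeg] with s hs
  exact eval_eq_sum_range' (Nat.lt_succ_of_le (natDegree_le_iff_degree_le.mpr hs)) x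

end

theorem HasDerivAt.two_mul_eq_of_sq_eventuallyEq {𝕜 𝔸 : Type*} [NontriviallyNormedField 𝕜]
    [NormedCommRing 𝔸] [NormedAlgebra 𝕜 𝔸] {f g : 𝕜 → 𝔸} {f' g' : 𝔸} {x : 𝕜}
    (hf : HasDerivAt f f' x) (hg : HasDerivAt g g' x) (hfg : ∀ᶠ y in 𝓝 x, f y ^ 2 = g y) :
    2 * f x * f' = g' := by
  have := (hf.fun_pow 2).congr_of_eventuallyEq (hfg.mono fun y hy => hy.symm)
  simpa using this.unique hg

theorem ContDiffAt.fderiv_partial_comm {E F G : Type*} [NormedAddCommGroup E] [NormedSpace ℝ E]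
    [NormedAddCommGroup F] [NormedSpace ℝ F] [NormedAddCommGroup G] [NormedSpace ℝ G]
    {f : E × F → G} {x : E} {y : F} (hf : ContDiffAt ℝ 2 f (x, y)) {u : E} {v : F}
    {A : F →L[ℝ] G} {B : E →L[ℝ] G}
    (hA : HasFDerivAt (fun y' => fderiv ℝ f (x, y') (u, 0)) A y)
    (hB : HasFDerivAt (fun x' => fderiv ℝ f (x', y) (0, v)) B x) :
    A v = B u := by
  have hf' : HasFDerivAt (fderiv ℝ f) (fderiv ℝ (fderiv ℝ f) (x, y)) (x, y) :=
    ((hf.fderiv_right le_rfl).differentiableAt one_ne_zero).hasFDerivAt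
  have hA' := (hf'.comp y (hasFDerivAt_prodMk_right x y)).clm_apply
    (hasFDerivAt_const (u, (0 : F)) y)
  have hB' := (hf'.comp x (hasFDerivAt_prodMk_left (𝕜 := ℝ) x y)).clm_apply
    (hasFDerivAt_const ((0 : E), v) x)
  rw [hA.unique hA', hB.unique hB']
  simpa using (hf.isSymmSndFDerivAt (by simp)).eq ((0 : E), v) (u, (0 : F))

section

variable {F G : Type*} [NormedAddCommGroup F] [NormedAddCommGroup G]

theorem DifferentiableAt.deriv_comp_prodMk_right {𝕜 E : Type*} [NontriviallyNormedField 𝕜]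
    [NormedAddCommGroup E] [NormedSpace 𝕜 E] [NormedSpace 𝕜 G] {f : E × 𝕜 → G} {x : E} {y : 𝕜}
    (hf : DifferentiableAt 𝕜 f (x, y)) :
    deriv (fun s => f (x, s)) y = fderiv 𝕜 f (x, y) (0, 1) :=
  (hf.hasFDerivAt.comp y (hasFDerivAt_prodMk_right x y)).hasDerivAt.deriv

variable [NormedSpace ℝ F] [NormedSpace ℂ G]

theorem DifferentiableAt.deriv_comp_prodMk_left_of_complex {f : ℂ × F → G} {x : ℂ} {y : F}
    (hf : DifferentiableAt ℝ f (x, y)) (hx : DifferentiableAt ℂ (fun w => f (w, y)) x) :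
    deriv (fun w => f (w, y)) x = fderiv ℝ f (x, y) (1, 0) := by
  have h := (hf.hasFDerivAt.comp x (hasFDerivAt_prodMk_left (𝕜 := ℝ) x y)).unique
    (hx.hasFDerivAt.restrictScalars ℝ)
  simpa using (DFunLike.congr_fun h 1).symm

theorem ContDiffAt.deriv_deriv_comm_of_complex {f : ℂ × ℝ → G} {x : ℂ} {y : ℝ}
    (hf : ContDiffAt ℝ 2 f (x, y))
    (hx : ∀ᶠ s in 𝓝 y, DifferentiableAt ℂ (fun w => f (w, s)) x) {F' G' : G}
    (hF : HasDerivAt (fun s => deriv (fun w => f (w, s)) x) F' y)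
    (hG : HasDerivAt (fun w => deriv (fun s => f (w, s)) y) G' x) :
    F' = G' := by
  have hdiff : ∀ᶠ p in 𝓝 (x, y), DifferentiableAt ℝ f p :=
    (hf.eventually (by simp)).mono fun p hp => hp.differentiableAt two_ne_zero
  have hA : HasDerivAt (fun s => fderiv ℝ f (x, s) (1, 0)) F' y := by
    refine hF.congr_of_eventuallyEq ?_
    filter_upwards [(tendsto_const_nhds.prodMk_nhds tendsto_id).eventually hdiff, hx]
      with s hs hsx
    exact (hs.deriv_comp_prodMk_left_of_complex hsx).symm
  have hB : HasDerivAt (fun w => fderiv ℝ f (w, y) (0, 1)) G' x := by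
    refine hG.congr_of_eventuallyEq ?_
    filter_upwards [(tendsto_id.prodMk_nhds tendsto_const_nhds).eventually hdiff] with w hw
    exact hw.deriv_comp_prodMk_right.symm
  simpa using hf.fderiv_partial_comm hA.hasFDerivAt (hB.hasFDerivAt.restrictScalars ℝ)
    (u := 1) (v := 1)

end

theorem whitham_identity_at {a b c : ℝ → ℂ[X]} {ν h : ℂ × ℝ → ℂ} {l : ℂ} {t : ℝ} {da db : ℂ}
    (hl : l ≠ 0) (hν : ν (l, t) ≠ 0)
    (ha : HasDerivAt (fun s => (a s).eval l) da t)
    (hb : HasDerivAt (fun s => (b s).eval l) db t)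
    (hνt : DifferentiableAt ℝ ν (l, t))
    (hνl : DifferentiableAt ℂ (fun w => ν (w, t)) l)
    (hνsq : ∀ᶠ p in 𝓝 (l, t), ν p ^ 2 = (a p.2).eval p.1 / p.1)
    (hh : ContDiffAt ℝ 2 h (l, t))
    (hhhol : ∀ᶠ p in 𝓝 (l, t), DifferentiableAt ℂ (fun w => h (w, p.2)) p.1)
    (hhl : ∀ᶠ p in 𝓝 (l, t),
      deriv (fun w => h (w, p.2)) p.1 = (b p.2).eval p.1 / (ν p * p.1 ^ 2))
    (hht : ∀ᶠ p in 𝓝 (l, t),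
      deriv (fun s => h (p.1, s)) p.2 = (c p.2).eval p.1 / (ν p * p.1)) :
    2 * db * (a t).eval l - (b t).eval l * da
      = 2 * l * (a t).eval l * (c t).derivative.eval l - (a t).eval l * (c t).eval l
        - l * (a t).derivative.eval l * (c t).eval l := by
  have hT : Tendsto (fun s => (l, s)) (𝓝 t) (𝓝 (l, t)) :=
    tendsto_const_nhds.prodMk_nhds tendsto_id
  have hL : Tendsto (fun w => (w, t)) (𝓝 l) (𝓝 (l, t)) :=
    tendsto_id.prodMk_nhds tendsto_const_nhds
  have hνsqT : ∀ᶠ s in 𝓝 t, ν (l, s) ^ 2 = (a s).eval l / l := hT.eventually hνsq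
  have hνsqL : ∀ᶠ w in 𝓝 l, ν (w, t) ^ 2 = (a t).eval w / w := hL.eventually hνsq
  have hhlT : ∀ᶠ s in 𝓝 t, deriv (fun w => h (w, s)) l = (b s).eval l / (ν (l, s) * l ^ 2) :=
    hT.eventually hhl
  have hhtL : ∀ᶠ w in 𝓝 l, deriv (fun s => h (w, s)) t = (c t).eval w / (ν (w, t) * w) :=
    hL.eventually hht
  obtain ⟨νt, hνT⟩ : ∃ νt, HasDerivAt (fun s => ν (l, s)) νt t :=
    ⟨_, (hνt.hasFDerivAt.comp t (hasFDerivAt_prodMk_right l t)).hasDerivAt⟩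
  obtain ⟨νl, hνL⟩ : ∃ νl, HasDerivAt (fun w => ν (w, t)) νl l := ⟨_, hνl.hasDerivAt⟩
  have hsqT : 2 * ν (l, t) * νt = da / l :=
    hνT.two_mul_eq_of_sq_eventuallyEq (ha.div_const l) hνsqT
  have haL := ((a t).hasDerivAt l).fun_div (hasDerivAt_id' l) hl
  have hsqL := hνL.two_mul_eq_of_sq_eventuallyEq haL hνsqL
  have ha0 : ν (l, t) ^ 2 * l = (a t).eval l := (eq_div_iff hl).mp hνsq.self_of_nhds
  have hF : HasDerivAt (fun s => deriv (fun w => h (w, s)) l)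
      ((db * (ν (l, t) * l ^ 2) - (b t).eval l * (νt * l ^ 2)) / (ν (l, t) * l ^ 2) ^ 2) t :=
    (hb.fun_div (hνT.mul_const (l ^ 2)) (by simp [hν, hl])).congr_of_eventuallyEq hhlT
  have hG : HasDerivAt (fun w => deriv (fun s => h (w, s)) t)
      (((c t).derivative.eval l * (ν (l, t) * l) - (c t).eval l * (νl * l + ν (l, t) * 1))
        / (ν (l, t) * l) ^ 2) l :=
    (((c t).hasDerivAt l).fun_div (hνL.fun_mul (hasDerivAt_id' l))
      (mul_ne_zero hν hl)).congr_of_eventuallyEq hhtL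
  have hmix := hh.deriv_deriv_comm_of_complex (hT.eventually hhhol) hF hG
  field_simp at hsqT hsqL hmix
  linear_combination 2 * ν (l, t) * l * hmix + (b t).eval l * hsqT - (c t).eval l * hsqL
    - (2 * db - 2 * l * (c t).derivative.eval l + 2 * (c t).eval l) * ha0

theorem whitham_polynomial_identity_general (g : ℕ) (I : Set ℝ)
    (hIopen : IsOpen I)
    (U : Set ℂ) (hUopen : IsOpen U) (hUne : U.Nonempty) (hU0 : (0 : ℂ) ∉ U)
    (a b c : ℝ → Polynomial ℂ)
    (hadeg : ∀ t ∈ I, (a t).degree ≤ (2 * g : ℕ))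
    (hbdeg : ∀ t ∈ I, (b t).degree ≤ (g + 1 : ℕ))
    (haC1 : ∀ n : ℕ, ContDiffOn ℝ 1 (fun t => (a t).coeff n) I)
    (hbC1 : ∀ n : ℕ, ContDiffOn ℝ 1 (fun t => (b t).coeff n) I)
    (ν h : ℂ × ℝ → ℂ)
    (hνC1 : ContDiffOn ℝ 1 ν (U ×ˢ I))
    (hνne : ∀ p ∈ U ×ˢ I, ν p ≠ 0)
    (hνhol : ∀ t ∈ I, ∀ l ∈ U, DifferentiableAt ℂ (fun w => ν (w, t)) l)
    (hνsq : ∀ l ∈ U, ∀ t ∈ I, ν (l, t) ^ 2 = (a t).eval l / l)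
    (hhC2 : ContDiffOn ℝ 2 h (U ×ˢ I))
    (hhhol : ∀ t ∈ I, ∀ l ∈ U, DifferentiableAt ℂ (fun w => h (w, t)) l)
    (hhl : ∀ l ∈ U, ∀ t ∈ I,
      deriv (fun w => h (w, t)) l = (b t).eval l / (ν (l, t) * l ^ 2))
    (hht : ∀ l ∈ U, ∀ t ∈ I,
      deriv (fun s => h (l, s)) t = (c t).eval l / (ν (l, t) * l)) :
    ∀ t ∈ I, ∀ l : ℂ,
      2 * (deriv (fun s => (b s).eval l) t) * (a t).eval l
          - (b t).eval l * (deriv (fun s => (a s).eval l) t)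
        = 2 * l * (a t).eval l * ((c t).derivative.eval l)
          - (a t).eval l * (c t).eval l
          - l * ((a t).derivative.eval l) * (c t).eval l := by
  intro t ht
  have hIt : I ∈ 𝓝 t := hIopen.mem_nhds ht
  have hdot : ∀ {p : ℝ → ℂ[X]} {d : ℕ}, (∀ s ∈ I, (p s).degree ≤ d) →
      (∀ n, ContDiffOn ℝ 1 (fun s => (p s).coeff n) I) →
      ∀ x, HasDerivAt (fun s => (p s).eval x) ((coeffwiseDeriv p d t).eval x) t :=
    fun hdeg hC1 => hasDerivAt_eval_coeffwiseDeriv (eventually_of_mem hIt hdeg)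
      fun n _ => ((hC1 n).differentiableOn one_ne_zero).differentiableAt hIt
  have key : ∀ l ∈ U,
      (C 2 * coeffwiseDeriv b (g + 1) t * a t - b t * coeffwiseDeriv a (2 * g) t).eval l
        = (C 2 * X * a t * (c t).derivative - a t * c t - X * (a t).derivative * c t).eval l := by
    intro l hl
    have hUI : U ×ˢ I ∈ 𝓝 (l, t) := (hUopen.prod hIopen).mem_nhds ⟨hl, ht⟩
    simp only [eval_sub, eval_mul, eval_C, eval_X]
    exact whitham_identity_at (ne_of_mem_of_not_mem hl hU0) (hνne _ ⟨hl, ht⟩)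
      (hdot hadeg haC1 l) (hdot hbdeg hbC1 l)
      ((hνC1.differentiableOn one_ne_zero).differentiableAt hUI) (hνhol t ht l hl)
      (eventually_of_mem hUI fun p hp => hνsq _ hp.1 _ hp.2) (hhC2.contDiffAt hUI)
      (eventually_of_mem hUI fun p hp => hhhol _ hp.2 _ hp.1)
      (eventually_of_mem hUI fun p hp => hhl _ hp.1 _ hp.2)
      (eventually_of_mem hUI fun p hp => hht _ hp.1 _ hp.2)
  obtain ⟨u, hu⟩ := hUne
  have hpoly := eq_of_infinite_eval_eq _ _
    ((infinite_of_mem_nhds u (hUopen.mem_nhds hu)).mono key)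
  intro l
  simpa [(hdot hadeg haC1 l).deriv, (hdot hbdeg hbC1 l).deriv] using congrArg (eval l) hpoly

/-- The Whitham deformation equation: if `ν² = a_t(λ)/λ`, `∂h/∂λ = b_t(λ)/(ν λ²)` and
`∂h/∂t = c_t(λ)/(ν λ)` on an open set `U × I`, with `h` twice continuously differentiable and
`ν, h` holomorphic in `λ`, then the mixed second derivatives of `h` commute, which is
equivalent to the polynomial identity
`2 ḃ a - b ȧ = 2 λ a c' - a c - λ a' c`. -/
theorem whitham_polynomial_identity (g : ℕ) (I : Set ℝ)
    (hIopen : IsOpen I) (hIconn : I.OrdConnected)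
    (U : Set ℂ) (hUopen : IsOpen U) (hUne : U.Nonempty) (hU0 : (0 : ℂ) ∉ U)
    (a b c : ℝ → Polynomial ℂ)
    (hadeg : ∀ t ∈ I, (a t).degree ≤ (2 * g : ℕ))
    (hbdeg : ∀ t ∈ I, (b t).degree ≤ (g + 1 : ℕ))
    (hcdeg : ∀ t ∈ I, (c t).degree ≤ (g + 1 : ℕ))
    (haC1 : ∀ n : ℕ, ContDiffOn ℝ 1 (fun t => (a t).coeff n) I)
    (hbC1 : ∀ n : ℕ, ContDiffOn ℝ 1 (fun t => (b t).coeff n) I)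
    (hcC1 : ∀ n : ℕ, ContDiffOn ℝ 1 (fun t => (c t).coeff n) I)
    (ν h : ℂ × ℝ → ℂ)
    (hνC1 : ContDiffOn ℝ 1 ν (U ×ˢ I))
    (hνne : ∀ p ∈ U ×ˢ I, ν p ≠ 0)
    (hνhol : ∀ t ∈ I, ∀ l ∈ U, DifferentiableAt ℂ (fun w => ν (w, t)) l)
    (hνsq : ∀ l ∈ U, ∀ t ∈ I, ν (l, t) ^ 2 = (a t).eval l / l)
    (hhC2 : ContDiffOn ℝ 2 h (U ×ˢ I))
    (hhhol : ∀ t ∈ I, ∀ l ∈ U, DifferentiableAt ℂ (fun w => h (w, t)) l)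
    (hhl : ∀ l ∈ U, ∀ t ∈ I,
      deriv (fun w => h (w, t)) l = (b t).eval l / (ν (l, t) * l ^ 2))
    (hht : ∀ l ∈ U, ∀ t ∈ I,
      deriv (fun s => h (l, s)) t = (c t).eval l / (ν (l, t) * l)) :
    ∀ t ∈ I, ∀ l : ℂ,
      2 * (deriv (fun s => (b s).eval l) t) * (a t).eval l
          - (b t).eval l * (deriv (fun s => (a s).eval l) t)
        = 2 * l * (a t).eval l * ((c t).derivative.eval l)
          - (a t).eval l * (c t).eval l
          - l * ((a t).derivative.eval l) * (c t).eval l :=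
  whitham_polynomial_identity_general g I hIopen U hUopen hUne hU0 a b c hadeg hbdeg haC1 hbC1 ν h
    hνC1 hνne hνhol hνsq hhC2 hhhol hhl hht
end

section
/- For an integer k ≥ 0 let a_k ∈ ℚ be defined by a_k = (−2)^k·binom(−1/2, k), equivalently a_k = binom(2k, k)/2^k. For ℓ ≥ 0 let C_ℓ(w) = Σ_{k=0}^{ℓ} a_k·w^{ℓ−k} ∈ ℚ[w]. Then in ℚ[w] the polynomial (w − 2)·C_ℓ(w)² has degree 2ℓ+1 with leading coefficient 1, its coefficient of w^d is 0 for every d with ℓ+1 ≤ d ≤ 2ℓ, and its coefficient of w^ℓ equals −2·a_{ℓ+1}. -/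
/-!
The `a_k` are the Taylor coefficients of `A(x) = (1 - 2x)^{-1/2}`: their recursion
`(k + 1) a_{k+1} = (2k + 1) a_k` says `(1 - 2x) A' = A`, so `(1 - 2x) A²` has derivative zero
and equals `1`. The polynomial `C_ℓ(w) = w^ℓ A_ℓ(1/w)` is the reflection of the truncation `A_ℓ`
of `A` below degree `ℓ + 1`, so `(w - 2) C_ℓ(w)²` is the reflection in degree `2ℓ + 1` of
`(1 - 2x) A_ℓ(x)²`. The latter agrees with `(1 - 2x) A(x)² = 1` up to order `ℓ`, and at order
`ℓ + 1` it lacks exactly the contribution `2 a_{ℓ+1} x^{ℓ+1}` of the missing term of `A`.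
-/

open Polynomial

noncomputable section

/-- `a_k = (-2)^k · binom(-1/2, k)`. -/
def aCoeff (k : ℕ) : ℚ := (-2 : ℚ) ^ k * Ring.choose (-1/2 : ℚ) k

/-- `C_ℓ(w) = Σ_{k=0}^{ℓ} a_k w^{ℓ-k}`, the polynomial part of `w^ℓ (1-2/w)^{-1/2}`. -/
def CPoly (ℓ : ℕ) : Polynomial ℚ :=
  ∑ k ∈ Finset.range (ℓ + 1), Polynomial.C (aCoeff k) * Polynomial.X ^ (ℓ - k)

theorem Ring.succ_mul_choose_succ {R : Type*} [CommRing R] [BinomialRing R] (r : R) (k : ℕ) :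
    (k + 1 : R) * Ring.choose r (k + 1) = (r - k) * Ring.choose r k := by
  have h := Ring.choose_smul_choose r (Nat.le_succ k)
  rw [Nat.choose_succ_self_right, show k.succ - k = 1 by omega, Ring.choose_one_right,
    nsmul_eq_mul] at h
  push_cast at h
  rw [h, mul_comm]

theorem Polynomial.reflect_sum {R ι : Type*} [Semiring R] (N : ℕ) (s : Finset ι)
    (f : ι → R[X]) : reflect N (∑ i ∈ s, f i) = ∑ i ∈ s, reflect N (f i) :=
  map_sum (⟨⟨reflect N, reflect_zero⟩, fun p q => reflect_add p q N⟩ : R[X] →+ R[X]) f s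

theorem Polynomial.coeff_mul_add_C_mul_X_pow_sq {R : Type*} [CommRing R] (p t : R[X]) (c : R)
    {m : ℕ} (hm : 0 < m) :
    (p * (t + C c * X ^ m) ^ 2).coeff m = (p * t ^ 2).coeff m + 2 * c * (p * t).coeff 0 := by
  have h : p * (t + C c * X ^ m) ^ 2 =
      p * t ^ 2 + X ^ m * (C (2 * c) * (p * t)) + X ^ (m + m) * (C (c ^ 2) * p) := by
    simp only [map_mul, map_pow, map_ofNat]
    ring
  rw [h, coeff_add, coeff_add, coeff_X_pow_mul', coeff_X_pow_mul', if_pos le_rfl,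
    if_neg (by omega), Nat.sub_self, coeff_C_mul, add_zero]

theorem PowerSeries.coeff_mul_trunc_pow_of_lt {R : Type*} [CommSemiring R] (p : R[X])
    (f : PowerSeries R) (k : ℕ) {n m : ℕ} (h : n < m) :
    (p * trunc m f ^ k).coeff n = coeff n ((p : PowerSeries R) * f ^ k) := by
  rw [← Polynomial.coeff_coe, ← coeff_coe_trunc_of_lt h, Polynomial.coe_mul, Polynomial.coe_pow,
    ← trunc_mul_trunc, trunc_trunc_pow, trunc_mul_trunc, coeff_coe_trunc_of_lt h]

lemma aCoeff_zero : aCoeff 0 = 1 := by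
  simp [aCoeff]

lemma succ_mul_aCoeff_succ (k : ℕ) : (k + 1 : ℚ) * aCoeff (k + 1) = (2 * k + 1) * aCoeff k := by
  have h := Ring.succ_mul_choose_succ (-1/2 : ℚ) k
  simp only [aCoeff, pow_succ]
  linear_combination (-2 : ℚ) ^ k * (-2) * h

lemma aCoeff_mul_two_pow (k : ℕ) : aCoeff k * 2 ^ k = k.centralBinom := by
  induction k with
  | zero => simp [aCoeff_zero]
  | succ k ih =>
    have hcb : ((k + 1 : ℕ) * (k + 1).centralBinom : ℚ) = 2 * (2 * k + 1) * k.centralBinom := by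
      exact_mod_cast Nat.succ_mul_centralBinom_succ k
    push_cast at hcb
    refine mul_left_cancel₀ (show (k + 1 : ℚ) ≠ 0 by positivity) ?_
    linear_combination 2 ^ (k + 1) * succ_mul_aCoeff_succ k + 2 * (2 * k + 1) * ih - hcb

lemma aCoeff_eq_centralBinom_div (k : ℕ) : aCoeff k = k.centralBinom / 2 ^ k := by
  rw [eq_div_iff (by positivity), aCoeff_mul_two_pow]

def aSeries : PowerSeries ℚ := PowerSeries.mk aCoeff

@[simp]
lemma coeff_aSeries (n : ℕ) : PowerSeries.coeff n aSeries = aCoeff n :=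
  PowerSeries.coeff_mk _ _

lemma one_sub_two_X_mul_derivative_aSeries :
    (1 - PowerSeries.C 2 * PowerSeries.X) * PowerSeries.derivative ℚ aSeries = aSeries := by
  ext n
  rcases n with _ | n
  · simp [sub_mul, mul_assoc, PowerSeries.coeff_derivative, PowerSeries.coeff_zero_X_mul,
      -PowerSeries.coeff_zero_eq_constantCoeff]
    linear_combination succ_mul_aCoeff_succ 0
  · simp only [sub_mul, one_mul, mul_assoc, map_sub, PowerSeries.coeff_C_mul,
      PowerSeries.coeff_succ_X_mul, PowerSeries.coeff_derivative, coeff_aSeries]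
    have h := succ_mul_aCoeff_succ (n + 1)
    push_cast at h ⊢
    linear_combination h

lemma one_sub_two_X_mul_aSeries_sq :
    (1 - PowerSeries.C 2 * PowerSeries.X) * aSeries ^ 2 = 1 := by
  refine PowerSeries.derivative.ext ?_ ?_
  · rw [Derivation.leibniz, PowerSeries.derivative_pow]
    simp only [map_sub, Derivation.leibniz, PowerSeries.derivative_C, PowerSeries.derivative_X,
      PowerSeries.derivative_one, smul_eq_mul]
    linear_combination (2 * aSeries) * one_sub_two_X_mul_derivative_aSeries -
      aSeries ^ 2 * map_ofNat (PowerSeries.C (R := ℚ)) 2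
  · simp [aSeries, aCoeff_zero]

lemma CPoly_eq_reflect_trunc (ℓ : ℕ) :
    CPoly ℓ = reflect ℓ (PowerSeries.trunc (ℓ + 1) aSeries) := by
  rw [PowerSeries.trunc_apply, ← Finset.range_eq_Ico, reflect_sum, CPoly]
  refine Finset.sum_congr rfl fun k hk => ?_
  rw [← C_mul_X_pow_eq_monomial, reflect_C_mul_X_pow,
    revAt_le (Nat.lt_succ_iff.mp (Finset.mem_range.mp hk)), coeff_aSeries]

lemma X_sub_C_two_mul_CPoly_sq (ℓ : ℕ) :
    (X - C 2) * CPoly ℓ ^ 2 =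
      reflect (2 * ℓ + 1) ((1 - C 2 * X) * PowerSeries.trunc (ℓ + 1) aSeries ^ 2) := by
  have hT : (PowerSeries.trunc (ℓ + 1) aSeries).natDegree ≤ ℓ :=
    Nat.lt_succ_iff.mp (PowerSeries.natDegree_trunc_lt _ _)
  have hlin : (1 - C 2 * X : ℚ[X]).natDegree ≤ 1 := by compute_degree
  rw [show 2 * ℓ + 1 = 1 + (ℓ + ℓ) by ring, sq, sq,
    reflect_mul _ _ hlin (natDegree_mul_le_of_le hT hT), reflect_mul _ _ hT hT,
    ← CPoly_eq_reflect_trunc]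
  simp [reflect_sub, reflect_C_mul, reflect_one]

lemma coeff_one_sub_two_X_mul_trunc_aSeries_sq {n m : ℕ} (h : n < m) :
    ((1 - C 2 * X) * PowerSeries.trunc m aSeries ^ 2).coeff n = if n = 0 then 1 else 0 := by
  rw [PowerSeries.coeff_mul_trunc_pow_of_lt _ _ _ h]
  simp [one_sub_two_X_mul_aSeries_sq, PowerSeries.coeff_one]

lemma coeff_one_sub_two_X_mul_trunc_aSeries_sq_succ (ℓ : ℕ) :
    ((1 - C 2 * X) * PowerSeries.trunc (ℓ + 1) aSeries ^ 2).coeff (ℓ + 1) =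
      -2 * aCoeff (ℓ + 1) := by
  have h := coeff_mul_add_C_mul_X_pow_sq (1 - C 2 * X) (PowerSeries.trunc (ℓ + 1) aSeries)
    (PowerSeries.coeff (ℓ + 1) aSeries) ℓ.succ_pos
  have hconst : ((1 - C 2 * X) * PowerSeries.trunc (ℓ + 1) aSeries).coeff 0 = 1 := by
    simp [mul_coeff_zero, PowerSeries.coeff_trunc, aCoeff_zero]
  rw [C_mul_X_pow_eq_monomial, ← PowerSeries.trunc_succ,
    coeff_one_sub_two_X_mul_trunc_aSeries_sq (Nat.lt_succ_self _), if_neg ℓ.succ_ne_zero, hconst,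
    mul_one, coeff_aSeries] at h
  linear_combination -h

/-- The polynomial `(w-2)·C_ℓ(w)²` is monic of degree `2ℓ+1`, its coefficients of `w^d`
vanish for `ℓ+1 ≤ d ≤ 2ℓ`, and its coefficient of `w^ℓ` is `-2 a_{ℓ+1}`.  Moreover
`a_k = binom(2k,k)/2^k`. -/
theorem deformation_polynomial_identity (ℓ : ℕ) :
    (∀ k : ℕ, aCoeff k = (Nat.choose (2 * k) k : ℚ) / 2 ^ k) ∧
    ((Polynomial.X - Polynomial.C (2 : ℚ)) * (CPoly ℓ) ^ 2).natDegree = 2 * ℓ + 1 ∧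
    ((Polynomial.X - Polynomial.C (2 : ℚ)) * (CPoly ℓ) ^ 2).leadingCoeff = 1 ∧
    (∀ d : ℕ, ℓ + 1 ≤ d → d ≤ 2 * ℓ →
      ((Polynomial.X - Polynomial.C (2 : ℚ)) * (CPoly ℓ) ^ 2).coeff d = 0) ∧
    ((Polynomial.X - Polynomial.C (2 : ℚ)) * (CPoly ℓ) ^ 2).coeff ℓ
      = -2 * aCoeff (ℓ + 1) := by
  set Q := (1 - C 2 * X) * PowerSeries.trunc (ℓ + 1) aSeries ^ 2
  have hQ : Q.natDegree ≤ 2 * ℓ + 1 := by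
    have hT := Nat.lt_succ_iff.mp (PowerSeries.natDegree_trunc_lt aSeries ℓ)
    refine natDegree_mul_le_of_le (by compute_degree) (natDegree_pow_le_of_le 2 hT) |>.trans ?_
    omega
  have hcoeff (d : ℕ) :
      ((X - C 2) * CPoly ℓ ^ 2).coeff d = Q.coeff (revAt (2 * ℓ + 1) d) := by
    rw [X_sub_C_two_mul_CPoly_sq, coeff_reflect]
  have htop : ((X - C 2) * CPoly ℓ ^ 2).coeff (2 * ℓ + 1) = 1 := by
    rw [hcoeff, revAt_le le_rfl, Nat.sub_self,
      coeff_one_sub_two_X_mul_trunc_aSeries_sq ℓ.succ_pos, if_pos rfl]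
  have hdeg : ((X - C 2) * CPoly ℓ ^ 2).natDegree = 2 * ℓ + 1 := by
    refine natDegree_eq_of_le_of_coeff_ne_zero ?_ (by rw [htop]; exact one_ne_zero)
    rw [X_sub_C_two_mul_CPoly_sq]
    exact natDegree_reflect_le.trans (max_le le_rfl hQ)
  refine ⟨aCoeff_eq_centralBinom_div, hdeg, by rw [leadingCoeff, hdeg, htop], ?_, ?_⟩
  · intro d hd₁ hd₂
    rw [hcoeff, revAt_le (by omega),
      coeff_one_sub_two_X_mul_trunc_aSeries_sq (by omega), if_neg (by omega)]
  · rw [hcoeff, revAt_le (by omega), show 2 * ℓ + 1 - ℓ = ℓ + 1 by omega,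
      coeff_one_sub_two_X_mul_trunc_aSeries_sq_succ]

end
end
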